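/- arXiv:1405.5479 — 9 statements merged into one kernel-verified Lean document; each statement's English description precedes it below -/
import Mathlib

section
/- Let G be a finite group, N a normal subgroup, ψ an irreducible character of N, and H a subgroup of the inertial subgroup I_G(ψ) containing N. Suppose ψ extends to a character ψ̃ of H. Then: (1) ψ̃ is irreducible; (2) for any irreducible character χ of H/N, the inflation Inf_{H/N}^H(χ) is an irreducible character of H; and (3) the products ψ̃ · Inf_{H/N}^H(χ), as χ ranges over Irr(H/N), are pairwise distinct irreducible characters of H. -/
/-!
Everything rests on the norm criterion `Simple V ↔ ∑ g, χ g * χ g⁻¹ = |H|`. Since `ψt` restricts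
to the irreducible `ψ`, the `N`-invariant endomorphisms of the space `V` affording `ψt` are the
scalars, and these are fixed by all of `H`. Averaging `linHom V V` over `N` and taking traces then
shows that every coset carries the same mass: `∑ n : N, ψt (x n) ψt ((x n)⁻¹) = |N|` for all `x`.
A class function `x ↦ w x * Φ (x N)` with this coset property for `w` and with
`∑ c, Φ c * Φ c⁻¹ = |H/N|` has norm `|H|`; taking `(w, Φ) = (ψt, 1), (1, χ), (ψt, χ)` gives the
three irreducibility claims. As `ψt` vanishes on no whole coset, `ψt · Inf χ` determines `χ`.
-/

open scoped Classical

noncomputable section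

/-- `f` is the character of some finite-dimensional complex representation of `G`. -/
def IsChar (G : Type) [Group G] (f : G → ℂ) : Prop :=
  ∃ V : FDRep ℂ G, f = V.character

/-- `f` is the character of some irreducible finite-dimensional complex representation. -/
def IsIrrChar (G : Type) [Group G] (f : G → ℂ) : Prop :=
  ∃ V : FDRep ℂ G, CategoryTheory.Simple V ∧ f = V.character

/-- The standard inner product of class functions. -/
def charInner (G : Type) [Group G] [Fintype G] (f g : G → ℂ) : ℂ :=
  (Fintype.card G : ℂ)⁻¹ * ∑ x : G, f x * (starRingEnd ℂ) (g x)

/-- `χ` is a constituent of `φ`. -/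
def IsConstituent (G : Type) [Group G] [Fintype G] (φ χ : G → ℂ) : Prop :=
  charInner G φ χ ≠ 0

/-- A supercharacter theory of a finite group `G`: a partition `K` of `G` into unions of
conjugacy classes together with a set `X` of characters, of equal (finite) cardinality,
with the characters constant on the blocks, and every irreducible character a constituent
of exactly one member of `X`. -/
def IsSCT (G : Type) [Group G] [Fintype G] (K : Set (Set G)) (X : Set (G → ℂ)) : Prop :=
  (∅ ∉ K) ∧ (∀ g : G, ∃! B, B ∈ K ∧ g ∈ B) ∧
  (∀ B ∈ K, ∀ g ∈ B, ∀ h : G, h * g * h⁻¹ ∈ B) ∧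
  (∀ χ ∈ X, IsChar G χ) ∧
  K.ncard = X.ncard ∧
  (∀ χ ∈ X, ∀ B ∈ K, ∀ g ∈ B, ∀ g' ∈ B, χ g = χ g') ∧
  (∀ φ : G → ℂ, IsIrrChar G φ → ∃! χ, χ ∈ X ∧ IsConstituent G φ χ)

namespace Representation

open Module

variable {k B V : Type*} [Field k] [Group B] [AddCommGroup V] [Module k V]

theorem sum_character_mul_left_eq_of_invariants_fixed [FiniteDimensional k V]
    (ρ : Representation k B V) (K : Subgroup B) [Fintype K] (b : B)
    (hb : ∀ v ∈ invariants (ρ.comp K.subtype), ρ b v = v) :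
    ∑ x : K, ρ.character (b * x) = ∑ x : K, ρ.character x := by
  set S : V →ₗ[k] V := ∑ x : K, ρ x
  have hKS : ∀ y : K, ρ y * S = S := fun y => by
    simp only [S, Finset.mul_sum, ← map_mul]
    exact Fintype.sum_equiv (Equiv.mulLeft y) _ _ fun x => rfl
  have hS : ρ b * S = S := LinearMap.ext fun v => hb _ fun y => LinearMap.congr_fun (hKS y) v
  calc ∑ x : K, ρ.character (b * x) = LinearMap.trace k V (ρ b * S) := by
        simp only [character, S, Finset.mul_sum, map_mul, map_sum]
    _ = ∑ x : K, ρ.character x := by rw [hS, map_sum]; rfl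

theorem linHom_apply_eq_of_finrank_invariants_eq_one (ρ : Representation k B V)
    (K : Subgroup B)
    (hK : finrank k (invariants (linHom (ρ.comp K.subtype) (ρ.comp K.subtype))) = 1) (b : B) :
    ∀ f ∈ invariants ((linHom ρ ρ).comp K.subtype), linHom ρ ρ b f = f := by
  intro f hf
  have hid : LinearMap.id ∈ invariants (linHom (ρ.comp K.subtype) (ρ.comp K.subtype)) := by
    intro x; ext v; simp
  by_cases hV : (⟨LinearMap.id, hid⟩ : invariants _) = 0
  · obtain rfl : f = 0 := by
      rw [← LinearMap.comp_id f, show (LinearMap.id : V →ₗ[k] V) = 0 from congrArg Subtype.val hV,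
        LinearMap.comp_zero]
    exact map_zero _
  obtain ⟨c, hc⟩ := (finrank_eq_one_iff_of_nonzero' _ hV).mp hK ⟨f, hf⟩
  obtain rfl : c • LinearMap.id = f := congrArg Subtype.val hc
  ext v
  simp

theorem sum_coset_character_mul_character_inv_eq_card [CharZero k] [FiniteDimensional k V]
    (ρ : Representation k B V) (K : Subgroup B) [Fintype K]
    (hK : ∑ x : K, ρ.character x * ρ.character x⁻¹ = Nat.card K) (b : B) :
    ∑ x : K, ρ.character (b * x) * ρ.character (b * x)⁻¹ = Nat.card K := by
  have : Invertible (Nat.card K : k) := invertibleOfNonzero (Nat.cast_ne_zero.mpr Nat.card_pos.ne')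
  have hlinHom : ∀ g, ρ.character g * ρ.character g⁻¹ = (linHom ρ ρ).character g := fun g => by
    rw [char_linHom, mul_comm]
  have hfinrank : finrank k (invariants (linHom (ρ.comp K.subtype) (ρ.comp K.subtype))) = 1 := by
    have h := card_inv_mul_sum_char_eq_finrank (linHom (ρ.comp K.subtype) (ρ.comp K.subtype))
    have hsum : ∑ x : K, (linHom (ρ.comp K.subtype) (ρ.comp K.subtype)).character x = Nat.card K :=
      by rw [← hK]; exact Finset.sum_congr rfl fun x _ => (hlinHom x).symm
    rw [hsum, inv_mul_cancel₀ (NeZero.ne _)] at h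
    exact_mod_cast h.symm
  simp_rw [hlinHom] at hK ⊢
  rw [sum_character_mul_left_eq_of_invariants_fixed _ K b
    (linHom_apply_eq_of_finrank_invariants_eq_one ρ K hfinrank b), hK]

end Representation

section CosetSums

variable {k H : Type*} [Field k] [Group H] [Fintype H] (K : Subgroup H)

theorem sum_comp_mk_eq_card_mul (P : H ⧸ K → k) :
    ∑ x : H, P x = Nat.card K * ∑ c, P c := by
  calc ∑ x : H, P x = ∑ x : H, P (Subgroup.groupEquivQuotientProdSubgroup x).1 := rfl
    _ = ∑ p : (H ⧸ K) × K, P p.1 := Subgroup.groupEquivQuotientProdSubgroup.sum_comp (P ·.1)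
    _ = Nat.card K * ∑ c, P c := by
      simp [Fintype.sum_prod_type, Finset.mul_sum, Nat.card_eq_fintype_card]

variable [CharZero k]

theorem sum_mul_inv_eq_card_of_eq_mul_comp_mk [K.Normal] (f w : H → k) (Φ : H ⧸ K → k)
    (hf : ∀ x, f x = w x * Φ x) (hw : ∀ x, ∑ y : K, w (x * y) * w (x * y)⁻¹ = Nat.card K)
    (hΦ : ∑ c, Φ c * Φ c⁻¹ = Nat.card (H ⧸ K)) :
    ∑ x, f x * f x⁻¹ = Nat.card H := by
  set F : H → k := fun x => f x * f x⁻¹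
  set P : H ⧸ K → k := fun c => Φ c * Φ c⁻¹
  have hF : ∀ x (y : K), F (x * y) = w (x * y) * w (x * y)⁻¹ * P x := fun x y => by
    simp only [F, P, hf, QuotientGroup.mk_inv, QuotientGroup.mk_mul_of_mem x y.2]
    ring
  have hK : (Nat.card K : k) ≠ 0 := Nat.cast_ne_zero.mpr Nat.card_pos.ne'
  refine mul_left_cancel₀ hK ?_
  have hshift : ∀ y : K, ∑ x, F (x * y) = ∑ x, F x := fun y =>
    Fintype.sum_equiv (Equiv.mulRight (y : H)) _ _ fun _ => rfl
  -- average over right translation by `K`, which does not move `x` in `H ⧸ K`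
  calc (Nat.card K : k) * ∑ x, F x = ∑ y : K, ∑ x, F (x * y) := by
        simp [hshift, Nat.card_eq_fintype_card]
    _ = ∑ x : H, Nat.card K * P x := by
        rw [Finset.sum_comm]
        simp only [hF, ← Finset.sum_mul, hw]
    _ = Nat.card K * Nat.card H := by
        rw [← Finset.mul_sum, sum_comp_mk_eq_card_mul K P, hΦ,
          Subgroup.card_eq_card_quotient_mul_card_subgroup K]
        push_cast
        ring

theorem eq_of_forall_mul_comp_mk_eq (w : H → k)
    (hw : ∀ x, ∑ y : K, w (x * y) * w (x * y)⁻¹ = Nat.card K) {Φ₁ Φ₂ : H ⧸ K → k}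
    (h : ∀ x, w x * Φ₁ x = w x * Φ₂ x) : Φ₁ = Φ₂ := by
  funext c
  obtain ⟨x, rfl⟩ := QuotientGroup.mk_surjective c
  obtain ⟨y, -, hy⟩ := Finset.exists_ne_zero_of_sum_ne_zero
    ((hw x).trans_ne (Nat.cast_ne_zero.mpr Nat.card_pos.ne'))
  have := mul_left_cancel₀ (left_ne_zero_of_mul hy) (h (x * y))
  rwa [QuotientGroup.mk_mul_of_mem x y.2] at this

end CosetSums

theorem Subgroup.sum_subgroupOf_eq_sum {M G : Type*} [AddCommMonoid M] [Group G]
    {N H : Subgroup G} (hNH : N ≤ H) [Fintype (N.subgroupOf H)] [Fintype N] (f : H → M) :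
    ∑ y : N.subgroupOf H, f y = ∑ n : N, f (Subgroup.inclusion hNH n) :=
  Fintype.sum_equiv (Subgroup.subgroupOfEquivOfLe hNH).toEquiv _ _ fun _ => rfl

namespace FDRep

open CategoryTheory

universe u

variable {k H : Type u} [Field k] [Group H] (K : Subgroup H) [K.Normal]

def inflation (U : FDRep k (H ⧸ K)) : FDRep k H :=
  FDRep.of (U.ρ.comp (QuotientGroup.mk' K))

theorem inflation_character (U : FDRep k (H ⧸ K)) (x : H) :
    (U.inflation K).character x = U.character x :=
  rfl

theorem simple_of_character_eq_mul [IsAlgClosed k] [CharZero k] [Fintype H] (X : FDRep k H)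
    (w : H → k) (Φ : H ⧸ K → k) (hX : ∀ x, X.character x = w x * Φ x)
    (hw : ∀ x, ∑ y : K, w (x * y) * w (x * y)⁻¹ = Nat.card K)
    (hΦ : ∑ c, Φ c * Φ c⁻¹ = Nat.card (H ⧸ K)) :
    Simple X :=
  (simple_iff_char_is_norm_one X).mpr
    (sum_mul_inv_eq_card_of_eq_mul_comp_mk K X.character w Φ hX hw hΦ)

end FDRep

open CategoryTheory MonoidalCategory

theorem clifford_extension_products_general (G : Type) [Group G] [Fintype G]
    (N H : Subgroup G) [hN : N.Normal] (hNH : N ≤ H)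
    (ψ : ↥N → ℂ) (hψ : IsIrrChar ↥N ψ)
    (ψt : ↥H → ℂ) (hψt : IsChar ↥H ψt)
    (hext : ∀ (n : G) (hn : n ∈ N), ψt ⟨n, hNH hn⟩ = ψ ⟨n, hn⟩) :
    IsIrrChar ↥H ψt ∧
    (∀ χ : (↥H ⧸ N.subgroupOf H) → ℂ, IsIrrChar _ χ →
      IsIrrChar ↥H (fun h => χ (QuotientGroup.mk h))) ∧
    (∀ χ : (↥H ⧸ N.subgroupOf H) → ℂ, IsIrrChar _ χ →
      IsIrrChar ↥H (fun h => ψt h * χ (QuotientGroup.mk h))) ∧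
    (∀ χ₁ χ₂ : (↥H ⧸ N.subgroupOf H) → ℂ, IsIrrChar _ χ₁ → IsIrrChar _ χ₂ →
      (fun h : ↥H => ψt h * χ₁ (QuotientGroup.mk h)) =
        (fun h : ↥H => ψt h * χ₂ (QuotientGroup.mk h)) → χ₁ = χ₂) := by
  obtain ⟨V, rfl⟩ := hψt
  obtain ⟨W, hW, rfl⟩ := hψ
  set K := N.subgroupOf H
  have hres : ∑ y : K, V.character y * V.character y⁻¹ = Nat.card K := by
    rw [Subgroup.sum_subgroupOf_eq_sum hNH (fun h => V.character h * V.character h⁻¹),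
      Nat.card_congr (Subgroup.subgroupOfEquivOfLe hNH).toEquiv,
      ← (FDRep.simple_iff_char_is_norm_one W).mp hW]
    refine Finset.sum_congr rfl fun n _ => ?_
    rw [← map_inv]
    exact congr($(hext n n.2) * $(hext _ n⁻¹.2))
  have hcoset := Representation.sum_coset_character_mul_character_inv_eq_card V.ρ K hres
  have hnorm : ∀ U : FDRep ℂ (H ⧸ K), Simple U →
      ∑ c, U.character c * U.character c⁻¹ = Nat.card (H ⧸ K) :=
    fun U hU => (FDRep.simple_iff_char_is_norm_one U).mp hU
  refine ⟨⟨V, ?_, rfl⟩, ?_, ?_, ?_⟩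
  · exact FDRep.simple_of_character_eq_mul K V V.character 1 (fun _ => (mul_one _).symm) hcoset
      (by simp)
  · rintro χ ⟨U, hU, rfl⟩
    have hchar := U.inflation_character K
    exact ⟨U.inflation K, FDRep.simple_of_character_eq_mul K _ 1 U.character
      (fun x => (hchar x).trans (one_mul _).symm) (by simp) (hnorm U hU), (funext hchar).symm⟩
  · rintro χ ⟨U, hU, rfl⟩
    have hchar : ∀ x, (V ⊗ U.inflation K).character x = V.character x * U.character x :=
      fun x => by rw [FDRep.char_tensor, Pi.mul_apply, FDRep.inflation_character]
    exact ⟨V ⊗ U.inflation K, FDRep.simple_of_character_eq_mul K _ _ _ hchar hcoset (hnorm U hU),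
      funext fun x => (hchar x).symm⟩
  · rintro χ₁ χ₂ - - heq
    exact eq_of_forall_mul_comp_mk_eq K V.character hcoset (congrFun heq)

/-- Clifford theory: if an irreducible character `ψ` of a normal subgroup `N` extends to a
character `ψt` of a subgroup `H` of the inertial subgroup `I_G(ψ)` containing `N`, then the
extension is irreducible, inflations of irreducible characters of `H/N` are irreducible, and
the products `ψt · Inf(χ)` are pairwise distinct irreducible characters of `H`. -/
theorem clifford_extension_products (G : Type) [Group G] [Fintype G]
    (N H : Subgroup G) [hN : N.Normal] (hNH : N ≤ H)
    (ψ : ↥N → ℂ) (hψ : IsIrrChar ↥N ψ)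
    (hstab : ∀ h ∈ H, ∀ n : ↥N, ψ ⟨h * ↑n * h⁻¹, hN.conj_mem ↑n n.2 h⟩ = ψ n)
    (ψt : ↥H → ℂ) (hψt : IsChar ↥H ψt)
    (hext : ∀ (n : G) (hn : n ∈ N), ψt ⟨n, hNH hn⟩ = ψ ⟨n, hn⟩) :
    IsIrrChar ↥H ψt ∧
    (∀ χ : (↥H ⧸ N.subgroupOf H) → ℂ, IsIrrChar _ χ →
      IsIrrChar ↥H (fun h => χ (QuotientGroup.mk h))) ∧
    (∀ χ : (↥H ⧸ N.subgroupOf H) → ℂ, IsIrrChar _ χ →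
      IsIrrChar ↥H (fun h => ψt h * χ (QuotientGroup.mk h))) ∧
    (∀ χ₁ χ₂ : (↥H ⧸ N.subgroupOf H) → ℂ, IsIrrChar _ χ₁ → IsIrrChar _ χ₂ →
      (fun h : ↥H => ψt h * χ₁ (QuotientGroup.mk h)) =
        (fun h : ↥H => ψt h * χ₂ (QuotientGroup.mk h)) → χ₁ = χ₂) :=
  clifford_extension_products_general G N H (hN := hN) hNH ψ hψ ψt hψt hext
end
end

section
/- Let G = N ⋊ H with N abelian, let ψ be a linear character of N, and let K ⊆ I_H(ψ) be a subgroup. Define ψ ⋊ χ = Ind_{NK}^G(ψ̃ · Inf_K^{NK}(χ)), where ψ̃ is the extension of ψ to NK given by ψ̃(nk) = ψ(n). Then for all n ∈ N and h ∈ H, (ψ ⋊ χ)(nh) = (1/|K|) · Σ_{k ∈ H, k h k⁻¹ ∈ K} ψ(k n k⁻¹) χ(k h k⁻¹). -/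
/-!
Write `x ∈ G` uniquely as `x = m y` with `m ∈ N`, `y ∈ H`, and put `h' = y h y⁻¹`. Then
`x (n h) x⁻¹ = (m (y n y⁻¹) (h' m⁻¹ h'⁻¹)) h'` is the `N·H` factorisation of the conjugate, so
`ψ̃ · Inf χ` takes the value `ψ(y n y⁻¹) χ(h')` there when `h' ∈ K` (linearity of `ψ` and its
`h'`-invariance cancel the `m`'s) and `0` otherwise. The value does not depend on `m`, so the sum
over `m ∈ N` contributes a factor `|N|`, which cancels against `|NK| = |N| |K|`.
-/

open scoped Classical

noncomputable section

/-- The character `ψ ⋊ χ = Ind_{NK}^G (ψ̃ · Inf_K^{NK} χ)` of `G = N ⋊ H`, written out via the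
induced-character formula: when `N ∩ K = 1` every element of `NK` factors uniquely as `n k`
with `n ∈ N`, `k ∈ K`, `|NK| = |N|·|K|`, and `(ψ̃ · Inf χ)(n k) = ψ n · χ k`. -/
def scr {G : Type} [Group G] [Fintype G] (N K : Subgroup G) (ψ χ : G → ℂ) : G → ℂ :=
  fun g => ((Nat.card N : ℂ) * (Nat.card K : ℂ))⁻¹ *
    ∑ x : G, ∑ n : G, ∑ k : G,
      if n ∈ N ∧ k ∈ K ∧ x * g * x⁻¹ = n * k then ψ n * χ k else 0

/-- Induction of a (super)class function from a subgroup `A` to a subgroup `B ⊇ A`,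
as a function vanishing off `B`. -/
def indOn {G : Type} [Group G] [Fintype G] (A B : Subgroup G) (f : G → ℂ) : G → ℂ :=
  fun g => if g ∈ B then
    (Nat.card A : ℂ)⁻¹ * ∑ x : G, if x ∈ B ∧ x * g * x⁻¹ ∈ A then f (x * g * x⁻¹) else 0
  else 0

theorem Subgroup.isComplement'_of_inf_eq_bot_of_sup_eq_top {G : Type*} [Group G]
    {N H : Subgroup G} [N.Normal] (hinf : N ⊓ H = ⊥) (hsup : N ⊔ H = ⊤) :
    N.IsComplement' H :=
  isComplement'_of_disjoint_and_mul_eq_univ (disjoint_iff.2 hinf)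
    (by rw [← normal_mul, hsup]; rfl)

theorem Subgroup.IsComplement'.sum_eq_sum_mul {G M : Type*} [Group G] [Fintype G]
    [AddCommMonoid M] {N H : Subgroup G} (hc : N.IsComplement' H) (f : G → M) :
    ∑ x, f x = ∑ m : N, ∑ y : H, f (m * y) := by
  rw [← (Equiv.ofBijective _ hc).sum_comp, Fintype.sum_prod_type]
  rfl

theorem Fintype.sum_ite_and_eq_sum_subtype {α M : Type*} [Fintype α] [AddCommMonoid M]
    (p q : α → Prop) [DecidablePred p] [DecidablePred q] (f : α → M) :
    ∑ x, (if p x ∧ q x then f x else 0) = ∑ y : Subtype p, if q y then f y else 0 := by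
  have hoff : ∑ y : {x // ¬p x}, (if p y ∧ q y then f y else 0) = 0 :=
    Finset.sum_eq_zero fun y _ => if_neg fun h => y.2 h.1
  rw [← Fintype.sum_subtype_add_sum_subtype p, hoff, add_zero]
  exact Finset.sum_congr rfl fun y _ => if_congr (and_iff_right y.2) rfl rfl

section LinearCharacter

variable {G : Type*} [Group G] {N : Subgroup G} {ψ : G → ℂ}

theorem mul_apply_inv_eq_one (hψ1 : ψ 1 = 1) (hψm : ∀ a ∈ N, ∀ b ∈ N, ψ (a * b) = ψ a * ψ b)
    {m : G} (hm : m ∈ N) : ψ m * ψ m⁻¹ = 1 := by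
  rw [← hψm m hm m⁻¹ (N.inv_mem hm), mul_inv_cancel, hψ1]

theorem apply_mul_mul_conj_inv [N.Normal] (hψ1 : ψ 1 = 1)
    (hψm : ∀ a ∈ N, ∀ b ∈ N, ψ (a * b) = ψ a * ψ b) {k : G} (hk : ∀ n ∈ N, ψ (k * n * k⁻¹) = ψ n)
    {m a : G} (hm : m ∈ N) (ha : a ∈ N) :
    ψ (m * a * (k * m⁻¹ * k⁻¹)) = ψ a := by
  have hm' : m⁻¹ ∈ N := N.inv_mem hm
  rw [hψm _ (N.mul_mem hm ha) _ (‹N.Normal›.conj_mem _ hm' k), hk _ hm', hψm _ hm _ ha,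
    mul_right_comm, mul_apply_inv_eq_one hψ1 hψm hm, one_mul]

end LinearCharacter

section TwistedInflation

variable {G : Type} [Group G] [Fintype G] {N H K : Subgroup G} {ψ χ : G → ℂ}

/-- `ψ̃ · Inf χ` on `NK`, extended by zero to `G`. -/
def tildeMulInf (N K : Subgroup G) (ψ χ : G → ℂ) (g : G) : ℂ :=
  ∑ n : G, ∑ k : G, if n ∈ N ∧ k ∈ K ∧ g = n * k then ψ n * χ k else 0

theorem scr_eq_sum_tildeMulInf (g : G) :
    scr N K ψ χ g =
      ((Nat.card N : ℂ) * Nat.card K)⁻¹ * ∑ x, tildeMulInf N K ψ χ (x * g * x⁻¹) :=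
  rfl

theorem tildeMulInf_mul (hNH : Disjoint N H) (hKH : K ≤ H) {a b : G} (ha : a ∈ N)
    (hb : b ∈ H) : tildeMulInf N K ψ χ (a * b) = if b ∈ K then ψ a * χ b else 0 := by
  have hfactor : ∀ n k, (n ∈ N ∧ k ∈ K ∧ a * b = n * k) ↔ (n = a ∧ k = b ∧ b ∈ K) := by
    refine fun n k => ⟨fun ⟨hn, hk, heq⟩ => ?_, fun ⟨hna, hkb, hbK⟩ => ?_⟩
    · have := Subgroup.mul_injective_of_disjoint hNH
        (a₁ := (⟨n, hn⟩, ⟨k, hKH hk⟩)) (a₂ := (⟨a, ha⟩, ⟨b, hb⟩)) heq.symm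
      simp only [Prod.mk.injEq, Subtype.mk.injEq] at this
      exact ⟨this.1, this.2, this.2 ▸ hk⟩
    · subst hna hkb
      exact ⟨ha, hbK, rfl⟩
  simp_rw [tildeMulInf, hfactor, ite_and]
  simp [Finset.sum_ite_eq']

theorem tildeMulInf_conj [N.Normal] (hNH : Disjoint N H) (hKH : K ≤ H) (hψ1 : ψ 1 = 1)
    (hψm : ∀ a ∈ N, ∀ b ∈ N, ψ (a * b) = ψ a * ψ b)
    (hstab : ∀ k ∈ K, ∀ n ∈ N, ψ (k * n * k⁻¹) = ψ n)
    {m y n h : G} (hm : m ∈ N) (hy : y ∈ H) (hn : n ∈ N) (hh : h ∈ H) :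
    tildeMulInf N K ψ χ (m * y * (n * h) * (m * y)⁻¹) =
      if y * h * y⁻¹ ∈ K then ψ (y * n * y⁻¹) * χ (y * h * y⁻¹) else 0 := by
  set h' := y * h * y⁻¹ with h'_def
  have hn' : y * n * y⁻¹ ∈ N := ‹N.Normal›.conj_mem n hn y
  have hdecomp : m * y * (n * h) * (m * y)⁻¹ = m * (y * n * y⁻¹) * (h' * m⁻¹ * h'⁻¹) * h' := by
    rw [h'_def]; group
  rw [hdecomp, tildeMulInf_mul hNH hKH
    (N.mul_mem (N.mul_mem hm hn') (‹N.Normal›.conj_mem _ (N.inv_mem hm) h'))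
    (H.mul_mem (H.mul_mem hy hh) (H.inv_mem hy))]
  split_ifs with hK
  · rw [apply_mul_mul_conj_inv hψ1 hψm (hstab h' hK) hm hn']
  · rfl

end TwistedInflation

theorem scr_value_formula_general (G : Type) [Group G] [Fintype G]
    (N H K : Subgroup G) [hN : N.Normal]
    (hinf : N ⊓ H = ⊥) (hsup : N ⊔ H = ⊤)
    (ψ χ : G → ℂ)
    (hψ1 : ψ 1 = 1) (hψm : ∀ a ∈ N, ∀ b ∈ N, ψ (a * b) = ψ a * ψ b)
    (hKH : K ≤ H)
    (hstab : ∀ k ∈ K, ∀ n ∈ N, ψ (k * n * k⁻¹) = ψ n) :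
    ∀ n ∈ N, ∀ h ∈ H,
      scr N K ψ χ (n * h) = (Nat.card K : ℂ)⁻¹ *
        ∑ k : G, if k ∈ H ∧ k * h * k⁻¹ ∈ K then ψ (k * n * k⁻¹) * χ (k * h * k⁻¹) else 0 := by
  intro n hn h hh
  have hc := Subgroup.isComplement'_of_inf_eq_bot_of_sup_eq_top hinf hsup
  have hN0 : (Nat.card N : ℂ) ≠ 0 := by exact_mod_cast Nat.card_pos.ne'
  calc scr N K ψ χ (n * h)
      = ((Nat.card N : ℂ) * Nat.card K)⁻¹ * ∑ _m : N, ∑ y : H,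
          if (y : G) * h * (y : G)⁻¹ ∈ K then
            ψ ((y : G) * n * (y : G)⁻¹) * χ ((y : G) * h * (y : G)⁻¹) else 0 := by
        rw [scr_eq_sum_tildeMulInf, hc.sum_eq_sum_mul]
        congr 1
        exact Fintype.sum_congr _ _ fun m => Fintype.sum_congr _ _ fun y =>
          tildeMulInf_conj hc.disjoint hKH hψ1 hψm hstab m.2 y.2 hn hh
    _ = (Nat.card K : ℂ)⁻¹ * ∑ y : H,
          if (y : G) * h * (y : G)⁻¹ ∈ K then
            ψ ((y : G) * n * (y : G)⁻¹) * χ ((y : G) * h * (y : G)⁻¹) else 0 := by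
        rw [Finset.sum_const, Finset.card_univ, ← Nat.card_eq_fintype_card, nsmul_eq_mul]
        field_simp
    _ = _ := by rw [Fintype.sum_ite_and_eq_sum_subtype]

/-- The value formula for `ψ ⋊ χ`: for `n ∈ N` and `h ∈ H`,
`(ψ ⋊ χ)(n h) = |K|⁻¹ ∑_{k ∈ H, k h k⁻¹ ∈ K} ψ(k n k⁻¹) χ(k h k⁻¹)`. -/
theorem scr_value_formula (G : Type) [Group G] [Fintype G]
    (N H K : Subgroup G) [hN : N.Normal]
    (hinf : N ⊓ H = ⊥) (hsup : N ⊔ H = ⊤)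
    (hab : ∀ a ∈ N, ∀ b ∈ N, a * b = b * a)
    (ψ χ : G → ℂ)
    (hψ1 : ψ 1 = 1) (hψm : ∀ a ∈ N, ∀ b ∈ N, ψ (a * b) = ψ a * ψ b)
    (hKH : K ≤ H)
    (hstab : ∀ k ∈ K, ∀ n ∈ N, ψ (k * n * k⁻¹) = ψ n)
    (hχ : ∃ V : FDRep ℂ ↥K, ∀ k : ↥K, χ ↑k = V.character k) :
    ∀ n ∈ N, ∀ h ∈ H,
      scr N K ψ χ (n * h) = (Nat.card K : ℂ)⁻¹ *
        ∑ k : G, if k ∈ H ∧ k * h * k⁻¹ ∈ K then ψ (k * n * k⁻¹) * χ (k * h * k⁻¹) else 0 :=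
  scr_value_formula_general G N H K (hN := hN) hinf hsup ψ χ hψ1 hψm hKH hstab
end
end

section
/- Let G = N ⋊ H with N abelian, ψ a linear character of N, and K₁ ⊆ K₂ ⊆ I_H(ψ) subgroups of H. For a character χ of K₁, one has ψ ⋊ Ind_{K₁}^{K₂}(χ) = ψ ⋊ χ as class functions on G. -/
/-!
Write `Ind_{K₁}^{K₂} χ (k) = |K₁|⁻¹ ∑_{y ∈ K₂} χ̇ (y k y⁻¹)` with `χ̇` the extension of `χ` by zero.
The unnormalised sum defining `ψ ⋊ f` is linear in `f`, and it does not change when `f` is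
precomposed with conjugation by `y ∈ K₂`: substituting `x ↦ y x`, `n ↦ y n y⁻¹`, `k ↦ y k y⁻¹`
preserves `N` (normal), `K₂` and `ψ` (as `K₂` stabilises `ψ`). So all `|K₂|` summands agree with
the one for `χ̇`, which is the sum for `ψ ⋊ χ` over `K₁`, and the normalisations match.
-/

open scoped Classical

noncomputable section

variable {G : Type} [Group G] [Fintype G]

def scrSum (N K : Subgroup G) (ψ f : G → ℂ) (g : G) : ℂ :=
  ∑ x : G, ∑ n : G, ∑ k : G, if n ∈ N ∧ k ∈ K ∧ x * g * x⁻¹ = n * k then ψ n * f k else 0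

variable {N K : Subgroup G} {ψ : G → ℂ}

omit [Fintype G] in
lemma Subgroup.conj_mem_iff_of_mem {y k : G} (hy : y ∈ K) : y * k * y⁻¹ ∈ K ↔ k ∈ K := by
  rw [Subgroup.mul_mem_cancel_right K (inv_mem hy), Subgroup.mul_mem_cancel_left K hy]

lemma scr_eq_inv_mul_scrSum (f : G → ℂ) (g : G) :
    scr N K ψ f g = ((Nat.card N : ℂ) * (Nat.card K : ℂ))⁻¹ * scrSum N K ψ f g :=
  rfl

lemma scrSum_congr {f f' : G → ℂ} (h : ∀ k ∈ K, f k = f' k) (g : G) :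
    scrSum N K ψ f g = scrSum N K ψ f' g := by
  unfold scrSum
  refine Fintype.sum_congr _ _ fun x =>
    Fintype.sum_congr _ _ fun n => Fintype.sum_congr _ _ fun k => ?_
  split_ifs with hk
  · rw [h k hk.2.1]
  · rfl

lemma scrSum_const_mul (c : ℂ) (f : G → ℂ) (g : G) :
    scrSum N K ψ (fun k => c * f k) g = c * scrSum N K ψ f g := by
  simp only [scrSum, Finset.mul_sum, mul_ite, mul_zero, mul_left_comm c]

lemma scrSum_finset_sum {ι : Type*} (s : Finset ι) (F : ι → G → ℂ) (g : G) :
    scrSum N K ψ (fun k => ∑ i ∈ s, F i k) g = ∑ i ∈ s, scrSum N K ψ (F i) g := by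
  have distrib : ∀ (c : Prop) [Decidable c] (a : ℂ) (k : G),
      (if c then a * ∑ i ∈ s, F i k else 0) = ∑ i ∈ s, if c then a * F i k else 0 := by
    intro c _ a k
    split_ifs <;> simp [Finset.mul_sum]
  simp only [scrSum, distrib]
  refine (Fintype.sum_congr _ _ fun x =>
    (Fintype.sum_congr _ _ fun n => Finset.sum_comm).trans Finset.sum_comm).trans Finset.sum_comm

lemma scrSum_indicator_of_le {K₁ K₂ : Subgroup G} (hle : K₁ ≤ K₂) (χ : G → ℂ) (g : G) :
    scrSum N K₂ ψ ((K₁ : Set G).indicator χ) g = scrSum N K₁ ψ χ g := by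
  unfold scrSum
  refine Fintype.sum_congr _ _ fun x =>
    Fintype.sum_congr _ _ fun n => Fintype.sum_congr _ _ fun k => ?_
  by_cases hk : k ∈ K₁
  · simp [hk, hle hk]
  · simp [hk]

lemma scrSum_comp_conj [hN : N.Normal] {y : G} (hy : y ∈ K)
    (hψ : ∀ n ∈ N, ψ (y * n * y⁻¹) = ψ n) (f : G → ℂ) (g : G) :
    scrSum N K ψ (fun k => f (y * k * y⁻¹)) g = scrSum N K ψ f g := by
  refine Fintype.sum_equiv (Equiv.mulLeft y) _ _ fun x => ?_
  refine Fintype.sum_equiv (MulAut.conj y).toEquiv _ _ fun n => ?_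
  refine Fintype.sum_equiv (MulAut.conj y).toEquiv _ _ fun k => ?_
  have hn : y * n * y⁻¹ ∈ N ↔ n ∈ N := by
    rw [hN.mem_comm_iff, inv_mul_cancel_left]
  have heq : y * x * g * (y * x)⁻¹ = y * n * y⁻¹ * (y * k * y⁻¹) ↔ x * g * x⁻¹ = n * k := by
    rw [show y * x * g * (y * x)⁻¹ = y * (x * g * x⁻¹) * y⁻¹ by group,
      show y * n * y⁻¹ * (y * k * y⁻¹) = y * (n * k) * y⁻¹ by group, mul_left_inj, mul_right_inj]
  simp only [Equiv.coe_mulLeft, MulEquiv.toEquiv_eq_coe, MulEquiv.coe_toEquiv, MulAut.conj_apply,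
    hn, Subgroup.conj_mem_iff_of_mem hy, heq]
  split_ifs with hc
  · rw [hψ n hc.1]
  · rfl

lemma indOn_eq_sum_indicator {A B : Subgroup G} (f : G → ℂ) {g : G} (hg : g ∈ B) :
    indOn A B f g =
      (Nat.card A : ℂ)⁻¹ *
        ∑ y ∈ Finset.univ.filter (· ∈ B), (A : Set G).indicator f (y * g * y⁻¹) := by
  rw [indOn, if_pos hg, Finset.sum_filter]
  congr 1
  refine Fintype.sum_congr _ _ fun y => ?_
  by_cases hy : y ∈ B <;> simp [hy, Set.indicator_apply]

theorem scr_ind_eq_general (G : Type) [Group G] [Fintype G]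
    (N K₁ K₂ : Subgroup G) [hN : N.Normal]
    (ψ χ : G → ℂ)
    (hK12 : K₁ ≤ K₂)
    (hstab : ∀ k ∈ K₂, ∀ n ∈ N, ψ (k * n * k⁻¹) = ψ n) :
    scr N K₂ ψ (indOn K₁ K₂ χ) = scr N K₁ ψ χ := by
  funext g
  have hsum : scrSum N K₂ ψ (indOn K₁ K₂ χ) g
      = (Nat.card K₁ : ℂ)⁻¹ * (Nat.card K₂ : ℂ) * scrSum N K₁ ψ χ g := by
    rw [scrSum_congr fun k hk => indOn_eq_sum_indicator χ hk, scrSum_const_mul, scrSum_finset_sum,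
      Finset.sum_congr rfl fun y hy =>
        scrSum_comp_conj (Finset.mem_filter.1 hy).2 (hstab y (Finset.mem_filter.1 hy).2) _ g,
      Finset.sum_const, nsmul_eq_mul, scrSum_indicator_of_le hK12, ← Fintype.card_subtype,
      ← Nat.card_eq_fintype_card, mul_assoc]
  have hK₁ : (Nat.card K₁ : ℂ) ≠ 0 := Nat.cast_ne_zero.2 Nat.card_pos.ne'
  have hK₂ : (Nat.card K₂ : ℂ) ≠ 0 := Nat.cast_ne_zero.2 Nat.card_pos.ne'
  rw [scr_eq_inv_mul_scrSum, scr_eq_inv_mul_scrSum, hsum]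
  field_simp

/-- `ψ ⋊ Ind_{K₁}^{K₂}(χ) = ψ ⋊ χ` for `K₁ ⊆ K₂ ⊆ I_H(ψ)`. -/
theorem scr_ind_eq (G : Type) [Group G] [Fintype G]
    (N H K₁ K₂ : Subgroup G) [hN : N.Normal]
    (hinf : N ⊓ H = ⊥) (hsup : N ⊔ H = ⊤)
    (hab : ∀ a ∈ N, ∀ b ∈ N, a * b = b * a)
    (ψ χ : G → ℂ)
    (hψ1 : ψ 1 = 1) (hψm : ∀ a ∈ N, ∀ b ∈ N, ψ (a * b) = ψ a * ψ b)
    (hK12 : K₁ ≤ K₂) (hKH : K₂ ≤ H)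
    (hstab : ∀ k ∈ K₂, ∀ n ∈ N, ψ (k * n * k⁻¹) = ψ n)
    (hχ : ∃ V : FDRep ℂ ↥K₁, ∀ k : ↥K₁, χ ↑k = V.character k) :
    scr N K₂ ψ (indOn K₁ K₂ χ) = scr N K₁ ψ χ :=
  scr_ind_eq_general G N K₁ K₂ (hN := hN) ψ χ hK12 hstab
end
end

section
/- Let H and K be subgroups of a finite group G, let χ be a character of H and ψ a character of K, and let X be a set of representatives for the (H,K) double cosets of G. Then Ind_H^G(χ) · Ind_K^G(ψ) = Σ_{x ∈ X} Ind_{H^x ∩ K}^G( Res_{H^x ∩ K}^{H^x}(χ^x) · Res_{H^x ∩ K}^K(ψ) ), where H^x = x⁻¹Hx and χ^x(g) = χ(x g x⁻¹). -/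
open scoped Classical

noncomputable section

/-! Expanding both induced characters, `Ind χ (g) · Ind ψ (g)` is `(|H| |K|)⁻¹ ∑_t Φ t` with
`Φ t = ∑_b χ°(t y_b t⁻¹) ψ°(y_b)`, `y_b = b g b⁻¹` (`°` = extension by zero), obtained by writing
the first conjugating element as `t b`. Since `χ` and `ψ` are class functions, `Φ` is constant
on `(H, K)` double cosets, so the sum collapses to `∑_{x ∈ X} |HxK| Φ x`; counting the fibres of
`(h, k) ↦ h x k` gives `|HxK| · |H^x ∩ K| = |H| |K|`, and `|H^x ∩ K|⁻¹ Φ x` is the `x`-th induced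
character on the right. -/

open DoubleCoset

section DoubleCosets

variable {G : Type*} [Group G]

theorem Subgroup.mem_map_conj_inv_iff (H : Subgroup G) (x y : G) :
    y ∈ H.map (MulAut.conj x⁻¹).toMonoidHom ↔ x * y * x⁻¹ ∈ H := by
  rw [Subgroup.mem_map_equiv]
  simp

theorem Subgroup.conj_mem_iff_of_mem_s5 {H : Subgroup G} {h : G} (hh : h ∈ H) (y : G) :
    h * y * h⁻¹ ∈ H ↔ y ∈ H := by
  rw [H.mul_mem_cancel_right (H.inv_mem hh), H.mul_mem_cancel_left hh]

theorem card_fiber_mul_mul_eq_card_inf (H K : Subgroup G) (x : G) {h₀ k₀ : G} (hh₀ : h₀ ∈ H)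
    (hk₀ : k₀ ∈ K) :
    Nat.card {p : H × K // (p.1 : G) * x * p.2 = h₀ * x * k₀} =
      Nat.card ↥(H.map (MulAut.conj x⁻¹).toMonoidHom ⊓ K) := by
  have conj_eq {h k : G} (hp : h * x * k = h₀ * x * k₀) : x * (k₀ * k⁻¹) * x⁻¹ = h₀⁻¹ * h := by
    rw [show h = h₀ * x * k₀ * k⁻¹ * x⁻¹ by rw [← hp]; group]
    group
  exact Nat.card_congr
    { toFun := fun p => ⟨k₀ * (p.1.2 : G)⁻¹, Subgroup.mem_inf.2
        ⟨(H.mem_map_conj_inv_iff x _).2 (by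
          rw [conj_eq p.2]; exact H.mul_mem (H.inv_mem hh₀) p.1.1.2),
        K.mul_mem hk₀ (K.inv_mem p.1.2.2)⟩⟩
      invFun := fun l => ⟨(⟨h₀ * (x * l * x⁻¹),
          H.mul_mem hh₀ ((H.mem_map_conj_inv_iff x l).1 (Subgroup.mem_inf.1 l.2).1)⟩,
        ⟨(l : G)⁻¹ * k₀, K.mul_mem (K.inv_mem (Subgroup.mem_inf.1 l.2).2) hk₀⟩), by group⟩
      left_inv := fun p => Subtype.ext (Prod.ext (Subtype.ext (by
        simp only; rw [conj_eq p.2]; group)) (Subtype.ext (by simp only; group)))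
      right_inv := fun l => Subtype.ext (by simp only; group) }

theorem card_doubleCoset_mul_card_inf [Finite G] (H K : Subgroup G) (x : G) :
    Nat.card (doubleCoset x H K) * Nat.card ↥(H.map (MulAut.conj x⁻¹).toMonoidHom ⊓ K) =
      Nat.card H * Nat.card K := by
  have := Fintype.ofFinite G
  let f : H × K → doubleCoset x H K := fun p =>
    ⟨p.1 * x * p.2, mem_doubleCoset.2 ⟨p.1, p.1.2, p.2, p.2.2, rfl⟩⟩
  have card_fiber (t) : Nat.card {p // f p = t} =
      Nat.card ↥(H.map (MulAut.conj x⁻¹).toMonoidHom ⊓ K) := by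
    obtain ⟨t, ht⟩ := t
    obtain ⟨h₀, hh₀, k₀, hk₀, rfl⟩ := mem_doubleCoset.1 ht
    rw [← card_fiber_mul_mul_eq_card_inf H K x hh₀ hk₀]
    exact Nat.card_congr (Equiv.subtypeEquivRight fun p => Subtype.ext_iff)
  rw [← Nat.card_prod H K, ← Nat.card_congr (Equiv.sigmaFiberEquiv f), Nat.card_sigma]
  simp only [card_fiber, Finset.sum_const, Finset.card_univ, smul_eq_mul,
    ← Nat.card_eq_fintype_card]

theorem sum_eq_sum_card_doubleCoset_smul {M : Type*} [Fintype G] [AddCommMonoid M]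
    {H K : Subgroup G} {X : Finset G}
    (hX : ∀ g : G, ∃! x, x ∈ X ∧ ∃ h ∈ H, ∃ k ∈ K, g = h * x * k)
    {Φ : G → M} (hΦ : ∀ h ∈ H, ∀ k ∈ K, ∀ t, Φ (h * t * k) = Φ t) :
    ∑ t, Φ t = ∑ x ∈ X, Nat.card (doubleCoset x H K) • Φ x := by
  have hΦx {x t : G} (ht : t ∈ doubleCoset x H K) : Φ t = Φ x := by
    obtain ⟨h, hh, k, hk, rfl⟩ := mem_doubleCoset.1 ht
    exact hΦ h hh k hk x
  calc ∑ t, Φ t = ∑ t, ∑ x ∈ X, if t ∈ doubleCoset x H K then Φ t else 0 := by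
        refine Finset.sum_congr rfl fun t _ => ?_
        obtain ⟨x, ⟨hxX, hx⟩, hunique⟩ := hX t
        rw [Finset.sum_eq_single_of_mem x hxX fun y hyX hyx => if_neg fun hy =>
          hyx (hunique y ⟨hyX, mem_doubleCoset.1 hy⟩), if_pos (mem_doubleCoset.2 hx)]
    _ = ∑ x ∈ X, ∑ t, if t ∈ doubleCoset x H K then Φ x else 0 := by
        rw [Finset.sum_comm]
        refine Finset.sum_congr rfl fun x _ => Finset.sum_congr rfl fun t _ => ?_
        split_ifs with ht
        exacts [hΦx ht, rfl]
    _ = ∑ x ∈ X, Nat.card (doubleCoset x H K) • Φ x := by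
        simp only [← Finset.sum_filter, Finset.sum_const, Nat.card_eq_fintype_card,
          Fintype.card_subtype]

end DoubleCosets

section ConjugationSums

variable {G R : Type*} [Group G]

theorem Subgroup.indicator_conj_of_mem [Zero R] {H : Subgroup G} {χ : G → R}
    (hχ : ∀ h ∈ H, ∀ a ∈ H, χ (h * a * h⁻¹) = χ a) {h : G} (hh : h ∈ H) (y : G) :
    (H : Set G).indicator χ (h * y * h⁻¹) = (H : Set G).indicator χ y := by
  by_cases hy : y ∈ H
  · rw [Set.indicator_of_mem ((H.conj_mem_iff_of_mem_s5 hh y).2 hy), Set.indicator_of_mem hy,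
      hχ h hh y hy]
  · rw [Set.indicator_of_notMem (mt (H.conj_mem_iff_of_mem_s5 hh y).1 hy),
      Set.indicator_of_notMem hy]

theorem Subgroup.indicator_conj_mul_indicator [MulZeroClass R] (H K : Subgroup G)
    (χ ψ : G → R) (x y : G) :
    (H : Set G).indicator χ (x * y * x⁻¹) * (K : Set G).indicator ψ y =
      ((H.map (MulAut.conj x⁻¹).toMonoidHom ⊓ K : Subgroup G) : Set G).indicator
        (fun y => χ (x * y * x⁻¹) * ψ y) y := by
  simp only [Set.indicator_apply, SetLike.mem_coe, Subgroup.mem_inf, H.mem_map_conj_inv_iff]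
  split_ifs <;> simp_all

theorem FDRep.conj_eq_of_character {k : Type*} [Field k] {H : Subgroup G} {χ : G → k}
    (hχ : ∃ V : FDRep k H, ∀ h : H, χ h = V.character h) :
    ∀ h ∈ H, ∀ a ∈ H, χ (h * a * h⁻¹) = χ a := by
  obtain ⟨V, hV⟩ := hχ
  intro h hh a ha
  have := hV (⟨h, hh⟩ * ⟨a, ha⟩ * ⟨h, hh⟩⁻¹)
  rw [V.char_conj, ← hV] at this
  simpa using this

variable [Fintype G] [CommSemiring R]

def sumConjMul (F Ψ : G → R) (g t : G) : R :=
  ∑ b, F (t * (b * g * b⁻¹) * t⁻¹) * Ψ (b * g * b⁻¹)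

theorem sum_conj_mul_sum_conj (F Ψ : G → R) (g : G) :
    (∑ a, F (a * g * a⁻¹)) * ∑ b, Ψ (b * g * b⁻¹) = ∑ t, sumConjMul F Ψ g t := by
  simp only [sumConjMul, Finset.sum_mul_sum]
  rw [Finset.sum_comm]
  conv_rhs => rw [Finset.sum_comm]
  refine Finset.sum_congr rfl fun b _ => Fintype.sum_equiv (Equiv.mulRight b⁻¹) _ _ fun a => ?_
  simp only [Equiv.coe_mulRight]
  congr 2
  group

theorem sumConjMul_mul_mul {H K : Subgroup G} {F Ψ : G → R}
    (hF : ∀ h ∈ H, ∀ y, F (h * y * h⁻¹) = F y) (hΨ : ∀ k ∈ K, ∀ y, Ψ (k * y * k⁻¹) = Ψ y)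
    (g : G) {h k : G} (hh : h ∈ H) (hk : k ∈ K) (t : G) :
    sumConjMul F Ψ g (h * t * k) = sumConjMul F Ψ g t := by
  refine Fintype.sum_equiv (Equiv.mulLeft k) _ _ fun b => ?_
  simp only [Equiv.coe_mulLeft]
  rw [show k * b * g * (k * b)⁻¹ = k * (b * g * b⁻¹) * k⁻¹ by group,
    show h * t * k * (b * g * b⁻¹) * (h * t * k)⁻¹ =
      h * (t * (k * (b * g * b⁻¹) * k⁻¹) * t⁻¹) * h⁻¹ by group, hF h hh, hΨ k hk]

end ConjugationSums

theorem indOn_top_apply {G : Type} [Group G] [Fintype G] (A : Subgroup G) (f : G → ℂ) (g : G) :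
    indOn A ⊤ f g = (Nat.card A : ℂ)⁻¹ * ∑ a, (A : Set G).indicator f (a * g * a⁻¹) := by
  simp [indOn, Set.indicator_apply]

theorem indOn_top_mul_indOn_top {G : Type} [Group G] [Fintype G] {H K : Subgroup G}
    {χ ψ : G → ℂ} (hχ : ∀ h ∈ H, ∀ a ∈ H, χ (h * a * h⁻¹) = χ a)
    (hψ : ∀ k ∈ K, ∀ a ∈ K, ψ (k * a * k⁻¹) = ψ a) {X : Finset G}
    (hX : ∀ g : G, ∃! x, x ∈ X ∧ ∃ h ∈ H, ∃ k ∈ K, g = h * x * k) (g : G) :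
    indOn H ⊤ χ g * indOn K ⊤ ψ g =
      ∑ x ∈ X, indOn ((H.map (MulAut.conj x⁻¹).toMonoidHom) ⊓ K) ⊤
        (fun y => χ (x * y * x⁻¹) * ψ y) g := by
  set F := (H : Set G).indicator χ
  set Ψ := (K : Set G).indicator ψ
  have hΦ : ∀ h ∈ H, ∀ k ∈ K, ∀ t, sumConjMul F Ψ g (h * t * k) = sumConjMul F Ψ g t :=
    fun h hh k hk => sumConjMul_mul_mul (fun h hh => H.indicator_conj_of_mem hχ hh)
      (fun k hk => K.indicator_conj_of_mem hψ hk) g hh hk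
  have hcard (x : G) : (Nat.card (doubleCoset x H K) : ℂ) =
      Nat.card H * Nat.card K / Nat.card ↥(H.map (MulAut.conj x⁻¹).toMonoidHom ⊓ K) := by
    rw [eq_div_iff (Nat.cast_ne_zero.2 Nat.card_pos.ne')]
    exact_mod_cast card_doubleCoset_mul_card_inf H K x
  have hH : (Nat.card H : ℂ) ≠ 0 := Nat.cast_ne_zero.2 Nat.card_pos.ne'
  have hK : (Nat.card K : ℂ) ≠ 0 := Nat.cast_ne_zero.2 Nat.card_pos.ne'
  simp only [indOn_top_apply, ← Subgroup.indicator_conj_mul_indicator]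
  calc (Nat.card H : ℂ)⁻¹ * (∑ a, F (a * g * a⁻¹)) * ((Nat.card K : ℂ)⁻¹ * ∑ b, Ψ (b * g * b⁻¹))
      = (Nat.card H * Nat.card K : ℂ)⁻¹ * ∑ t, sumConjMul F Ψ g t := by
        rw [← sum_conj_mul_sum_conj]
        ring
    _ = (Nat.card H * Nat.card K : ℂ)⁻¹ *
          ∑ x ∈ X, Nat.card (doubleCoset x H K) • sumConjMul F Ψ g x := by
        rw [sum_eq_sum_card_doubleCoset_smul hX hΦ]
    _ = _ := by
        rw [Finset.mul_sum]
        refine Finset.sum_congr rfl fun x _ => ?_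
        rw [nsmul_eq_mul, hcard]
        field_simp
        rfl

/-- Mackey's formula for a product of induced characters:
`Ind_H^G(χ) · Ind_K^G(ψ) = ∑_{x ∈ X} Ind_{H^x ∩ K}^G (Res(χ^x) · Res(ψ))`,
where `X` is a set of `(H,K)` double coset representatives, `H^x = x⁻¹ H x`, and
`χ^x(g) = χ (x g x⁻¹)`. -/
theorem mackey_product_of_induced (G : Type) [Group G] [Fintype G]
    (H K : Subgroup G) (χ ψ : G → ℂ)
    (hχ : ∃ V : FDRep ℂ ↥H, ∀ h : ↥H, χ ↑h = V.character h)
    (hψ : ∃ V : FDRep ℂ ↥K, ∀ k : ↥K, ψ ↑k = V.character k)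
    (X : Finset G)
    (hX : ∀ g : G, ∃! x, x ∈ X ∧ ∃ h ∈ H, ∃ k ∈ K, g = h * x * k) :
    ∀ g : G,
      indOn H ⊤ χ g * indOn K ⊤ ψ g =
        ∑ x ∈ X, indOn ((H.map (MulAut.conj x⁻¹).toMonoidHom) ⊓ K) ⊤
          (fun y => χ (x * y * x⁻¹) * ψ y) g :=
  indOn_top_mul_indOn_top (FDRep.conj_eq_of_character hχ) (FDRep.conj_eq_of_character hψ) hX
end
end

section
/- Let G = N ⋊ H with N abelian, let ψ₁, ψ₂ be linear characters of N, let χᵢ be a character of Kᵢ ⊆ I_H(ψᵢ) for i = 1,2, and let X be a set of (K₁,K₂) double coset representatives of H. Then (ψ₁ ⋊ χ₁)(ψ₂ ⋊ χ₂) = Σ_{x ∈ X} (ψ₁^x ψ₂) ⋊ ( Res_{K₁^x ∩ K₂}^{K₁^x}(χ₁^x) · Res_{K₁^x ∩ K₂}^{K₂}(χ₂) ). -/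
open scoped Classical

noncomputable section

/-!
Write `F = ψ̃ · Inf χ` (extended by zero), so that `(ψ ⋊ χ)(g) = (|N||K|)⁻¹ ∑_t F(t g t⁻¹)`.
Substituting `a = t b` turns the product of two such sums into `∑_t Θ(t)` with
`Θ(t) = ∑_b F₁(t u_b t⁻¹) F₂(u_b)`, `u_b = b g b⁻¹`. Because `ψ₁` is linear and `K₁`-stable and
the `χᵢ` are class functions, `Θ` is left `N`- and `K₁`-invariant and right `K₂`-invariant, so
over `G = N H` the sum collapses to `|N| ∑_{x ∈ X} |K₁ x K₂| Θ(x)`, and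
`|K₁ x K₂| = |K₁||K₂| / |K₁^x ∩ K₂|`. Finally, for `x ∈ H`, `F₁(x u x⁻¹) F₂(u)` is the function
`F` of `(ψ₁^x ψ₂, χ₁^x χ₂)` on `K₁^x ∩ K₂`, since factorizations `u = n k` with `n ∈ N`, `k ∈ H`
are unique.
-/

open Finset DoubleCoset
open scoped Pointwise

section

variable {G : Type} [Group G]

lemma Subgroup.eq_and_eq_of_mul_eq_mul {N K : Subgroup G} (hNK : Disjoint N K) {n n' k k' : G}
    (hn : n ∈ N) (hn' : n' ∈ N) (hk : k ∈ K) (hk' : k' ∈ K) (h : n * k = n' * k') :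
    n = n' ∧ k = k' := by
  have := Subgroup.mul_injective_of_disjoint hNK
    (a₁ := (⟨n, hn⟩, ⟨k, hk⟩)) (a₂ := (⟨n', hn'⟩, ⟨k', hk'⟩)) h
  simpa [Prod.ext_iff] using this

lemma Subgroup.mem_map_conj_inv {K : Subgroup G} {x k : G} :
    k ∈ K.map (MulAut.conj x⁻¹).toMonoidHom ↔ x * k * x⁻¹ ∈ K := by
  rw [Subgroup.mem_map_equiv]
  simp

lemma Subgroup.Normal.conj_mem_iff {N : Subgroup G} (hN : N.Normal) (x : G) {n : G} :
    x * n * x⁻¹ ∈ N ↔ n ∈ N :=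
  ⟨fun h => by simpa [mul_assoc] using hN.conj_mem _ h x⁻¹, fun h => hN.conj_mem n h x⟩

lemma Subgroup.map_conj_inv_of_mem {K : Subgroup G} {k : G} (hk : k ∈ K) :
    K.map (MulAut.conj k⁻¹).toMonoidHom = K := by
  ext a
  rw [Subgroup.mem_map_conj_inv, Subgroup.mul_mem_cancel_right _ (inv_mem hk),
    Subgroup.mul_mem_cancel_left _ hk]

lemma Subgroup.map_conj_inv_le {K H : Subgroup G} (hKH : K ≤ H) {x : G} (hx : x ∈ H) :
    K.map (MulAut.conj x⁻¹).toMonoidHom ≤ H :=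
  (Subgroup.map_mono hKH).trans (Subgroup.map_conj_inv_of_mem hx).le

end

section LiftProd

variable {G : Type} [Group G] [Fintype G] {N K : Subgroup G} {ψ χ : G → ℂ}

/-- `ψ̃ · Inf_K^{NK} χ` on `NK`, extended by zero to `G` (when `N ⊓ K = ⊥`). -/
def liftProd (N K : Subgroup G) (ψ χ : G → ℂ) (u : G) : ℂ :=
  ∑ n : G, ∑ k : G, if n ∈ N ∧ k ∈ K ∧ u = n * k then ψ n * χ k else 0

lemma scr_eq_sum_liftProd (N K : Subgroup G) (ψ χ : G → ℂ) (g : G) :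
    scr N K ψ χ g = ((Nat.card N : ℂ) * Nat.card K)⁻¹ * ∑ x, liftProd N K ψ χ (x * g * x⁻¹) :=
  rfl

lemma liftProd_mul (hNK : Disjoint N K) {n k : G} (hn : n ∈ N) (hk : k ∈ K) :
    liftProd N K ψ χ (n * k) = ψ n * χ k := by
  have hfactor : ∀ n' k', (n' ∈ N ∧ k' ∈ K ∧ n * k = n' * k') ↔ (n' = n ∧ k' = k) := by
    refine fun n' k' => ⟨fun ⟨hn', hk', h⟩ => ?_, ?_⟩
    · exact (Subgroup.eq_and_eq_of_mul_eq_mul hNK hn' hn hk' hk h.symm)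
    · rintro ⟨rfl, rfl⟩
      exact ⟨hn, hk, rfl⟩
  simp [liftProd, hfactor, ite_and]

lemma liftProd_eq_zero {u : G} (hu : u ∉ (N : Set G) * (K : Set G)) : liftProd N K ψ χ u = 0 :=
  Finset.sum_eq_zero fun n _ => Finset.sum_eq_zero fun k _ =>
    if_neg fun ⟨hn, hk, h⟩ => hu ⟨n, hn, k, hk, h.symm⟩

lemma liftProd_congr {ψ' χ' : G → ℂ} (hψ : ∀ n ∈ N, ψ n = ψ' n) (hχ : ∀ k ∈ K, χ k = χ' k) :
    liftProd N K ψ χ = liftProd N K ψ' χ' := by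
  funext u
  unfold liftProd
  refine Finset.sum_congr rfl fun n _ => Finset.sum_congr rfl fun k _ => ?_
  split_ifs with h
  · rw [hψ n h.1, hχ k h.2.1]
  · rfl

lemma liftProd_conj (hN : N.Normal) (x u : G) :
    liftProd N K ψ χ (x * u * x⁻¹) =
      liftProd N (K.map (MulAut.conj x⁻¹).toMonoidHom)
        (fun n => ψ (x * n * x⁻¹)) (fun k => χ (x * k * x⁻¹)) u := by
  unfold liftProd
  refine (Fintype.sum_equiv (MulAut.conj x).toEquiv _ _ fun n => ?_).symm
  refine Fintype.sum_equiv (MulAut.conj x).toEquiv _ _ fun k => if_congr ?_ rfl rfl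
  have hconj : x * n * x⁻¹ * (x * k * x⁻¹) = x * (n * k) * x⁻¹ := by group
  simp only [MulEquiv.toEquiv_eq_coe, MulEquiv.coe_toEquiv, MulAut.conj_apply,
    Subgroup.mem_map_conj_inv, hN.conj_mem_iff, hconj, mul_left_inj, mul_right_inj]

lemma liftProd_conj_of_mem_right (hN : N.Normal)
    (hψ : ∀ k ∈ K, ∀ n ∈ N, ψ (k * n * k⁻¹) = ψ n)
    (hχ : ∀ a ∈ K, ∀ k ∈ K, χ (a * k * a⁻¹) = χ k) {k : G} (hk : k ∈ K) (u : G) :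
    liftProd N K ψ χ (k * u * k⁻¹) = liftProd N K ψ χ u := by
  rw [liftProd_conj hN, Subgroup.map_conj_inv_of_mem hk,
    liftProd_congr (hψ k hk) (hχ k hk)]

lemma liftProd_conj_of_mem_left (hN : N.Normal) (hNK : Disjoint N K) (hψ1 : ψ 1 = 1)
    (hψm : ∀ a ∈ N, ∀ b ∈ N, ψ (a * b) = ψ a * ψ b)
    (hψ : ∀ k ∈ K, ∀ n ∈ N, ψ (k * n * k⁻¹) = ψ n) {n : G} (hn : n ∈ N) (u : G) :
    liftProd N K ψ χ (n * u * n⁻¹) = liftProd N K ψ χ u := by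
  have hmove : ∀ c m k : G, c * (m * k) * c⁻¹ = c * m * (k * c⁻¹ * k⁻¹) * k := by
    intros; group
  have hmem : ∀ {c v : G}, c ∈ N → v ∈ (N : Set G) * (K : Set G) →
      c * v * c⁻¹ ∈ (N : Set G) * (K : Set G) := by
    rintro c _ hc ⟨m, hm, k, hk, rfl⟩
    exact ⟨_, mul_mem (mul_mem hc hm) (hN.conj_mem _ (inv_mem hc) k), k, hk, (hmove c m k).symm⟩
  by_cases hu : u ∈ (N : Set G) * (K : Set G)
  · obtain ⟨m, hm, k, hk, rfl⟩ := hu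
    have hn' : k * n⁻¹ * k⁻¹ ∈ N := hN.conj_mem _ (inv_mem hn) k
    rw [hmove, liftProd_mul hNK (mul_mem (mul_mem hn hm) hn') hk, liftProd_mul hNK hm hk,
      hψm _ (mul_mem hn hm) _ hn', hψm n hn m hm, hψ k hk _ (inv_mem hn)]
    have hinv : ψ n * ψ n⁻¹ = 1 := by rw [← hψm n hn _ (inv_mem hn), mul_inv_cancel, hψ1]
    linear_combination ψ m * χ k * hinv
  · have hconj : n * u * n⁻¹ ∉ (N : Set G) * (K : Set G) := fun h =>
      hu (by simpa [mul_assoc] using hmem (inv_mem hn) h)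
    rw [liftProd_eq_zero hconj, liftProd_eq_zero hu]

lemma liftProd_mul_liftProd {H A B : Subgroup G} {ψ' χ' : G → ℂ} (hNH : Disjoint N H)
    (hA : A ≤ H) (hB : B ≤ H) (u : G) :
    liftProd N A ψ χ u * liftProd N B ψ' χ' u =
      liftProd N (A ⊓ B) (fun y => ψ y * ψ' y) (fun y => χ y * χ' y) u := by
  by_cases hAB : u ∈ (N : Set G) * ((A ⊓ B : Subgroup G) : Set G)
  · obtain ⟨m, hm, k, hk, rfl⟩ := hAB
    rw [liftProd_mul (hNH.mono_right hA) hm hk.1, liftProd_mul (hNH.mono_right hB) hm hk.2,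
      liftProd_mul (hNH.mono_right (inf_le_left.trans hA)) hm hk]
    ring
  rw [liftProd_eq_zero hAB]
  by_cases hA' : u ∈ (N : Set G) * (A : Set G)
  · by_cases hB' : u ∈ (N : Set G) * (B : Set G)
    · obtain ⟨m, hm, a, ha, rfl⟩ := hA'
      obtain ⟨m', hm', b, hb, he⟩ := hB'
      obtain ⟨rfl, rfl⟩ := Subgroup.eq_and_eq_of_mul_eq_mul hNH hm' hm (hB hb) (hA ha) he
      exact absurd ⟨m', hm', b, ⟨ha, hb⟩, rfl⟩ hAB
    · rw [liftProd_eq_zero hB', mul_zero]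
  · rw [liftProd_eq_zero hA', zero_mul]

end LiftProd

section MackeyTerm

variable {G : Type} [Group G] [Fintype G] (f₁ f₂ : G → ℂ) (g : G)

def mackeyTerm (t : G) : ℂ :=
  ∑ b, f₁ (t * (b * g * b⁻¹) * t⁻¹) * f₂ (b * g * b⁻¹)

lemma sum_mackeyTerm :
    ∑ t, mackeyTerm f₁ f₂ g t = (∑ a, f₁ (a * g * a⁻¹)) * ∑ b, f₂ (b * g * b⁻¹) := by
  rw [Finset.sum_mul_sum, Finset.sum_comm]
  unfold mackeyTerm
  rw [Finset.sum_comm]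
  refine Finset.sum_congr rfl fun b _ => ?_
  refine Fintype.sum_equiv (Equiv.mulRight b) _ _ fun t => ?_
  simp only [Equiv.coe_mulRight, mul_inv_rev]
  group

variable {f₁ f₂ g}

lemma mackeyTerm_mul_left {s : G} (hs : ∀ w, f₁ (s * w * s⁻¹) = f₁ w) (t : G) :
    mackeyTerm f₁ f₂ g (s * t) = mackeyTerm f₁ f₂ g t := by
  refine Finset.sum_congr rfl fun b _ => ?_
  rw [← hs (t * (b * g * b⁻¹) * t⁻¹)]
  group

lemma mackeyTerm_mul_right {s : G} (hs : ∀ w, f₂ (s * w * s⁻¹) = f₂ w) (t : G) :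
    mackeyTerm f₁ f₂ g (t * s) = mackeyTerm f₁ f₂ g t := by
  refine Fintype.sum_equiv (Equiv.mulLeft s) _ _ fun b => ?_
  rw [← hs (b * g * b⁻¹)]
  simp only [Equiv.coe_mulLeft]
  group

end MackeyTerm

section SubgroupSums

variable {G : Type} [Group G] [Fintype G]

lemma Subgroup.IsComplement'.sum_eq_card_mul_sum {N H : Subgroup G} (hc : N.IsComplement' H)
    {f : G → ℂ} (hf : ∀ n ∈ N, ∀ t, f (n * t) = f t) :
    ∑ t, f t = Nat.card N * ∑ h : H, f h := by
  rw [← Fintype.sum_bijective _ hc (fun p => f (p.1 * p.2)) f fun _ => rfl,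
    Fintype.sum_prod_type]
  simp only [fun (n : N) (h : H) => hf n n.2 h]
  rw [Finset.sum_const, Finset.card_univ, ← Nat.card_eq_fintype_card, nsmul_eq_mul]
  rfl

lemma card_filter_mul_eq_of_mem_doubleCoset {K₁ K₂ : Subgroup G} {x h : G}
    (hh : h ∈ doubleCoset x K₁ K₂) :
    #{p : K₁ × K₂ | (p.1 : G) * x * p.2 = h} =
      Nat.card ↥(K₁.map (MulAut.conj x⁻¹).toMonoidHom ⊓ K₂) := by
  obtain ⟨a₀, ha₀, b₀, hb₀, rfl⟩ := mem_doubleCoset.mp hh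
  rw [← Fintype.card_subtype, ← Nat.card_eq_fintype_card]
  refine Nat.card_congr
    { toFun := fun p => ⟨p.1.2 * b₀⁻¹, Subgroup.mem_inf.mpr ⟨Subgroup.mem_map_conj_inv.mpr ?_,
        mul_mem p.1.2.2 (inv_mem hb₀)⟩⟩
      invFun := fun d => ⟨(⟨a₀ * (x * (d : G)⁻¹ * x⁻¹), mul_mem ha₀ ?_⟩,
        ⟨d * b₀, mul_mem (Subgroup.mem_inf.mp d.2).2 hb₀⟩), by group⟩
      left_inv := fun p => ?_
      right_inv := fun d => by ext; simp }
  · have h : x * (p.1.2 * b₀⁻¹) * x⁻¹ = (p.1.1 : G)⁻¹ * (p.1.1 * x * p.1.2) * b₀⁻¹ * x⁻¹ := by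
      group
    rw [h, p.2]
    simpa [mul_assoc] using mul_mem (inv_mem p.1.1.2) ha₀
  · have h := (Subgroup.mem_map_conj_inv.mp (Subgroup.mem_inf.mp d.2).1)
    simpa [mul_assoc] using inv_mem h
  · obtain ⟨⟨⟨a, ha⟩, ⟨b, hb⟩⟩, hab⟩ := p
    obtain rfl : a = a₀ * x * b₀ * b⁻¹ * x⁻¹ := by
      rw [← hab]
      group
    ext
    · simp only [mul_inv_rev, inv_inv]
      group
    · simp

lemma sum_prod_eq_card_mul_sum_doubleCoset (K₁ K₂ : Subgroup G) (x : G) (φ : G → ℂ) :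
    ∑ p : K₁ × K₂, φ (p.1 * x * p.2) =
      Nat.card ↥(K₁.map (MulAut.conj x⁻¹).toMonoidHom ⊓ K₂) *
        ∑ h with h ∈ doubleCoset x K₁ K₂, φ h := by
  rw [← Finset.sum_fiberwise' Finset.univ (fun p : K₁ × K₂ => (p.1 : G) * x * p.2) φ,
    Finset.sum_filter, Finset.mul_sum]
  refine Finset.sum_congr rfl fun h _ => ?_
  rw [Finset.sum_const, nsmul_eq_mul]
  split_ifs with hh
  · rw [card_filter_mul_eq_of_mem_doubleCoset hh]
  · rw [Finset.card_eq_zero.mpr, Nat.cast_zero, zero_mul, mul_zero]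
    refine Finset.filter_eq_empty_iff.mpr fun p _ hp => hh ?_
    exact mem_doubleCoset.mpr ⟨p.1, p.1.2, p.2, p.2.2, hp.symm⟩

lemma sum_filter_mem_eq_sum_doubleCoset {H K₁ K₂ : Subgroup G} (hK₁ : K₁ ≤ H) (hK₂ : K₂ ≤ H)
    {X : Finset G} (hXH : ∀ x ∈ X, x ∈ H)
    (hX : ∀ h ∈ H, ∃! x, x ∈ X ∧ h ∈ doubleCoset x K₁ K₂) (f : G → ℂ) :
    ∑ h with h ∈ H, f h = ∑ x ∈ X, ∑ h with h ∈ doubleCoset x K₁ K₂, f h := by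
  simp only [Finset.sum_filter]
  rw [Finset.sum_comm]
  refine Finset.sum_congr rfl fun h _ => ?_
  split_ifs with hh
  · obtain ⟨x, ⟨hx, hhx⟩, huniq⟩ := hX h hh
    rw [Finset.sum_eq_single_of_mem x hx, if_pos hhx]
    exact fun y hy hyx => if_neg fun hhy => hyx (huniq y ⟨hy, hhy⟩)
  · refine (Finset.sum_eq_zero fun x hx => ?_).symm
    refine if_neg fun hhx => hh ?_
    obtain ⟨a, ha, b, hb, rfl⟩ := mem_doubleCoset.mp hhx
    exact mul_mem (mul_mem (hK₁ ha) (hXH x hx)) (hK₂ hb)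

lemma sum_filter_mem_eq_sum_reps_of_invariant {H K₁ K₂ : Subgroup G} (hK₁ : K₁ ≤ H)
    (hK₂ : K₂ ≤ H) {X : Finset G} (hXH : ∀ x ∈ X, x ∈ H)
    (hX : ∀ h ∈ H, ∃! x, x ∈ X ∧ h ∈ doubleCoset x K₁ K₂) {f : G → ℂ}
    (hf : ∀ a ∈ K₁, ∀ b ∈ K₂, ∀ t, f (a * t * b) = f t) :
    ∑ h with h ∈ H, f h = ∑ x ∈ X, (Nat.card K₁ * Nat.card K₂ : ℂ) /
      Nat.card ↥(K₁.map (MulAut.conj x⁻¹).toMonoidHom ⊓ K₂) * f x := by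
  rw [sum_filter_mem_eq_sum_doubleCoset hK₁ hK₂ hXH hX]
  refine Finset.sum_congr rfl fun x _ => ?_
  have h := sum_prod_eq_card_mul_sum_doubleCoset K₁ K₂ x f
  simp only [fun (p : K₁ × K₂) => hf p.1 p.1.2 p.2 p.2.2 x, Finset.sum_const, Finset.card_univ,
    ← Nat.card_eq_fintype_card, Nat.card_prod, Nat.cast_mul, nsmul_eq_mul] at h
  have hJ : (Nat.card ↥(K₁.map (MulAut.conj x⁻¹).toMonoidHom ⊓ K₂) : ℂ) ≠ 0 :=
    Nat.cast_ne_zero.mpr Nat.card_pos.ne'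
  rw [div_mul_eq_mul_div, eq_div_iff hJ, h, mul_comm]

end SubgroupSums

lemma conj_invariant_of_eq_character {G : Type} [Group G] {K : Subgroup G} {χ : G → ℂ}
    (hχ : ∃ V : FDRep ℂ K, ∀ k : K, χ k = V.character k) :
    ∀ a ∈ K, ∀ k ∈ K, χ (a * k * a⁻¹) = χ k := by
  obtain ⟨V, hV⟩ := hχ
  intro a ha k hk
  have h := hV (⟨a, ha⟩ * ⟨k, hk⟩ * (⟨a, ha⟩ : K)⁻¹)
  rw [FDRep.char_conj, ← hV] at h
  exact h

theorem scr_product_formula_general (G : Type) [Group G] [Fintype G]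
    (N H K₁ K₂ : Subgroup G) [hN : N.Normal]
    (hinf : N ⊓ H = ⊥) (hsup : N ⊔ H = ⊤)
    (ψ₁ ψ₂ χ₁ χ₂ : G → ℂ)
    (hψ₁1 : ψ₁ 1 = 1) (hψ₁m : ∀ a ∈ N, ∀ b ∈ N, ψ₁ (a * b) = ψ₁ a * ψ₁ b)
    (hK₁H : K₁ ≤ H) (hK₂H : K₂ ≤ H)
    (hstab₁ : ∀ k ∈ K₁, ∀ n ∈ N, ψ₁ (k * n * k⁻¹) = ψ₁ n)
    (hstab₂ : ∀ k ∈ K₂, ∀ n ∈ N, ψ₂ (k * n * k⁻¹) = ψ₂ n)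
    (hχ₁ : ∃ V : FDRep ℂ ↥K₁, ∀ k : ↥K₁, χ₁ ↑k = V.character k)
    (hχ₂ : ∃ V : FDRep ℂ ↥K₂, ∀ k : ↥K₂, χ₂ ↑k = V.character k)
    (X : Finset G) (hXH : ∀ x ∈ X, x ∈ H)
    (hX : ∀ h ∈ H, ∃! x, x ∈ X ∧ ∃ a ∈ K₁, ∃ b ∈ K₂, h = a * x * b) :
    ∀ g : G,
      scr N K₁ ψ₁ χ₁ g * scr N K₂ ψ₂ χ₂ g =
        ∑ x ∈ X, scr N ((K₁.map (MulAut.conj x⁻¹).toMonoidHom) ⊓ K₂)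
          (fun y => ψ₁ (x * y * x⁻¹) * ψ₂ y)
          (fun y => χ₁ (x * y * x⁻¹) * χ₂ y) g := by
  intro g
  have hNH : Disjoint N H := disjoint_iff.mpr hinf
  have hc : N.IsComplement' H := Subgroup.isComplement'_of_disjoint_and_mul_eq_univ hNH
    (by rw [← Subgroup.normal_mul, hsup, Subgroup.coe_top])
  have hX' : ∀ h ∈ H, ∃! x, x ∈ X ∧ h ∈ doubleCoset x K₁ K₂ := by
    simpa only [mem_doubleCoset, SetLike.mem_coe] using hX
  set Θ := mackeyTerm (liftProd N K₁ ψ₁ χ₁) (liftProd N K₂ ψ₂ χ₂) g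
  have hΘN : ∀ n ∈ N, ∀ t, Θ (n * t) = Θ t := fun n hn =>
    mackeyTerm_mul_left (liftProd_conj_of_mem_left hN (hNH.mono_right hK₁H) hψ₁1 hψ₁m hstab₁ hn)
  have hΘK : ∀ a ∈ K₁, ∀ b ∈ K₂, ∀ t, Θ (a * t * b) = Θ t := fun a ha b hb t =>
    (mackeyTerm_mul_right (liftProd_conj_of_mem_right hN hstab₂
        (conj_invariant_of_eq_character hχ₂) hb) (a * t)).trans
      (mackeyTerm_mul_left (liftProd_conj_of_mem_right hN hstab₁
        (conj_invariant_of_eq_character hχ₁) ha) t)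
  have hΘX : ∀ x ∈ H, Θ x = ∑ c, liftProd N ((K₁.map (MulAut.conj x⁻¹).toMonoidHom) ⊓ K₂)
      (fun y => ψ₁ (x * y * x⁻¹) * ψ₂ y) (fun y => χ₁ (x * y * x⁻¹) * χ₂ y) (c * g * c⁻¹) :=
    fun x hx => Finset.sum_congr rfl fun c _ => by
      rw [liftProd_conj hN, liftProd_mul_liftProd hNH (Subgroup.map_conj_inv_le hK₁H hx) hK₂H]
  calc scr N K₁ ψ₁ χ₁ g * scr N K₂ ψ₂ χ₂ g
      = ((Nat.card N : ℂ) * Nat.card K₁)⁻¹ * ((Nat.card N : ℂ) * Nat.card K₂)⁻¹ * ∑ t, Θ t := by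
        rw [scr_eq_sum_liftProd, scr_eq_sum_liftProd, sum_mackeyTerm]
        ring
    _ = ((Nat.card N : ℂ) * Nat.card K₁)⁻¹ * ((Nat.card N : ℂ) * Nat.card K₂)⁻¹ *
          (Nat.card N * ∑ h with h ∈ H, Θ h) := by
        rw [hc.sum_eq_card_mul_sum hΘN, Finset.sum_subtype _ (fun _ => Finset.mem_filter_univ _)]
    _ = _ := by
        rw [sum_filter_mem_eq_sum_reps_of_invariant hK₁H hK₂H hXH hX' hΘK, Finset.mul_sum,
          Finset.mul_sum]
        refine Finset.sum_congr rfl fun x hx => ?_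
        rw [hΘX x (hXH x hx), scr_eq_sum_liftProd]
        field_simp

/-- The Mackey-type product formula for the characters `ψ ⋊ χ` of `G = N ⋊ H`:
`(ψ₁ ⋊ χ₁)(ψ₂ ⋊ χ₂) = ∑_{x ∈ X} (ψ₁^x ψ₂) ⋊ (Res(χ₁^x) · Res(χ₂))`, where `X` is a set of
`(K₁,K₂)` double coset representatives of `H`. -/
theorem scr_product_formula (G : Type) [Group G] [Fintype G]
    (N H K₁ K₂ : Subgroup G) [hN : N.Normal]
    (hinf : N ⊓ H = ⊥) (hsup : N ⊔ H = ⊤)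
    (hab : ∀ a ∈ N, ∀ b ∈ N, a * b = b * a)
    (ψ₁ ψ₂ χ₁ χ₂ : G → ℂ)
    (hψ₁1 : ψ₁ 1 = 1) (hψ₁m : ∀ a ∈ N, ∀ b ∈ N, ψ₁ (a * b) = ψ₁ a * ψ₁ b)
    (hψ₂1 : ψ₂ 1 = 1) (hψ₂m : ∀ a ∈ N, ∀ b ∈ N, ψ₂ (a * b) = ψ₂ a * ψ₂ b)
    (hK₁H : K₁ ≤ H) (hK₂H : K₂ ≤ H)
    (hstab₁ : ∀ k ∈ K₁, ∀ n ∈ N, ψ₁ (k * n * k⁻¹) = ψ₁ n)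
    (hstab₂ : ∀ k ∈ K₂, ∀ n ∈ N, ψ₂ (k * n * k⁻¹) = ψ₂ n)
    (hχ₁ : ∃ V : FDRep ℂ ↥K₁, ∀ k : ↥K₁, χ₁ ↑k = V.character k)
    (hχ₂ : ∃ V : FDRep ℂ ↥K₂, ∀ k : ↥K₂, χ₂ ↑k = V.character k)
    (X : Finset G) (hXH : ∀ x ∈ X, x ∈ H)
    (hX : ∀ h ∈ H, ∃! x, x ∈ X ∧ ∃ a ∈ K₁, ∃ b ∈ K₂, h = a * x * b) :
    ∀ g : G,
      scr N K₁ ψ₁ χ₁ g * scr N K₂ ψ₂ χ₂ g =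
        ∑ x ∈ X, scr N ((K₁.map (MulAut.conj x⁻¹).toMonoidHom) ⊓ K₂)
          (fun y => ψ₁ (x * y * x⁻¹) * ψ₂ y)
          (fun y => χ₁ (x * y * x⁻¹) * χ₂ y) g :=
  scr_product_formula_general G N H K₁ K₂ (hN := hN) hinf hsup ψ₁ ψ₂ χ₁ χ₂ hψ₁1 hψ₁m hK₁H hK₂H
    hstab₁ hstab₂ hχ₁ hχ₂ X hXH hX
end
end

section
/- Let G = 1 + 𝔤 be an algebra group over F_q and let A = 1 + 𝔞 ⊆ B = 1 + 𝔟 be left ideal subgroups of G (𝔞 ⊆ 𝔟 left ideals of 𝔤). Call a function α : A → ℂ a superclass function if α(1+x) = α(1+gxa) for all g ∈ G, a ∈ A, x ∈ 𝔞 with gxa ∈ 𝔞. If α is a superclass function of A, then Ind_A^B(α) is a superclass function of B; and if β is a superclass function of B, then Res_A^B(β) is a superclass function of A. -/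
/-!
Write `f p = α (1 + p)` for `p ∈ 𝔞` and `f p = 0` otherwise. Since `𝔞` is a left ideal of `𝔤`,
the superclass condition says exactly that `f (u p) = f p` for every `u ∈ G`. The summand of
`Ind_A^B α (1 + y)` at `x ∈ B` is `f (x y x⁻¹) = f (y x⁻¹)`, so
`Ind_A^B α (1 + y) = |A|⁻¹ ∑_{x ∈ B} f (y x⁻¹)`. For `1 + u y v` the same computation gives
`∑_{x ∈ B} f (y v x⁻¹)`, which is the previous sum reindexed by `x ↦ x v`.
Restriction is immediate from `𝔞 ⊆ 𝔟`.

`1 + 𝔤` and `1 + 𝔟` are closed under inverses because they are submonoids of the finite group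
`Rˣ`; nilpotence is what makes `1 + p` a unit for `p ∈ 𝔞`.
-/

open scoped Classical

noncomputable section

/-- The units of `R` of the form `1 + x` with `x ∈ s`; for `s` a nilpotent algebra this is
the algebra group `1 + s`. -/
def unitsOf {R : Type} [Ring R] (s : Set R) : Set Rˣ :=
  {u : Rˣ | ∃ x ∈ s, (u : R) = 1 + x}

/-- `α` is a superclass function of the left ideal subgroup `1 + h` of the algebra group
`1 + g`: `α (1 + x) = α (1 + u x v)` for all `x ∈ h`, `u ∈ 1 + g`, `v ∈ 1 + h`
with `u x v ∈ h`. -/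
def IsSCF {R : Type} [Ring R] (g h : Set R) (α : Rˣ → ℂ) : Prop :=
  ∀ x ∈ h, ∀ u ∈ unitsOf g, ∀ v ∈ unitsOf h, ∀ w z : Rˣ,
    (w : R) = 1 + x → ((u : R) * x * (v : R)) ∈ h →
    (z : R) = 1 + (u : R) * x * (v : R) → α w = α z

/-- Induction of a function from the subgroup `1 + a` to the subgroup `1 + b`. -/
def indSCF {R : Type} [Ring R] [Fintype R] (a b : Set R) (α : Rˣ → ℂ) : Rˣ → ℂ :=
  fun g => ((unitsOf a).ncard : ℂ)⁻¹ *
    ∑ x : Rˣ, if x ∈ unitsOf b ∧ x * g * x⁻¹ ∈ unitsOf a then α (x * g * x⁻¹) else 0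

theorem Submonoid.inv_mem_of_finite {G : Type*} [Group G] [Finite G] (S : Submonoid G) {x : G}
    (hx : x ∈ S) : x⁻¹ ∈ S :=
  Submonoid.powers_le.mpr hx <| mem_powers_iff_mem_zpowers.mpr <|
    Subgroup.inv_mem _ (Subgroup.mem_zpowers x)

theorem isNilpotent_of_forall_prod_eq_zero {R : Type*} [Ring R] {s : Set R}
    (hnil : ∃ m : ℕ, ∀ f : Fin (m + 1) → R, (∀ i, f i ∈ s) → (List.ofFn f).prod = 0)
    {x : R} (hx : x ∈ s) : IsNilpotent x := by
  obtain ⟨m, hm⟩ := hnil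
  exact ⟨m + 1, by simpa [pow_succ'] using hm (fun _ => x) fun _ => hx⟩

namespace AlgebraGroup

variable {R : Type} [Ring R]

theorem mem_unitsOf_iff {s : Set R} {u : Rˣ} : u ∈ unitsOf s ↔ (u : R) - 1 ∈ s :=
  ⟨fun ⟨x, hx, hu⟩ => by simpa [hu] using hx, fun h => ⟨_, h, (add_sub_cancel _ _).symm⟩⟩

theorem unitsOf_mono {s t : Set R} (hst : s ⊆ t) : unitsOf s ⊆ unitsOf t :=
  fun _ ⟨x, hx, hu⟩ => ⟨x, hst hx, hu⟩

def onePlusSubmonoid (s : NonUnitalSubsemiring R) : Submonoid Rˣ where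
  carrier := unitsOf s
  one_mem' := ⟨0, s.zero_mem, (add_zero _).symm⟩
  mul_mem' := by
    rintro _ _ ⟨x, hx, hu⟩ ⟨y, hy, hv⟩
    refine ⟨x + y + x * y, s.add_mem (s.add_mem hx hy) (s.mul_mem hx hy), ?_⟩
    rw [Units.val_mul, hu, hv]
    noncomm_ring

def onePlusSubgroup [Finite R] (s : NonUnitalSubsemiring R) : Subgroup Rˣ :=
  { onePlusSubmonoid s with inv_mem' := (onePlusSubmonoid s).inv_mem_of_finite }

theorem val_mul_mem {g : Set R} {a : AddSubmonoid R} (hleft : ∀ x ∈ g, ∀ y ∈ a, x * y ∈ a)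
    {u : Rˣ} (hu : u ∈ unitsOf g) {p : R} (hp : p ∈ a) : (u : R) * p ∈ a := by
  obtain ⟨c, hc, huc⟩ := hu
  rw [huc, add_mul, one_mul]
  exact a.add_mem hp (hleft c hc p hp)

theorem val_mul_mem_iff [Finite R] {g : NonUnitalSubsemiring R} {a : AddSubmonoid R}
    (hleft : ∀ x ∈ g, ∀ y ∈ a, x * y ∈ a) {u : Rˣ} (hu : u ∈ unitsOf g) {p : R} :
    (u : R) * p ∈ a ↔ p ∈ a := by
  refine ⟨fun hup => ?_, val_mul_mem hleft hu⟩
  have hu' : u⁻¹ ∈ unitsOf g := (onePlusSubgroup g).inv_mem hu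
  simpa using val_mul_mem hleft hu' hup

/-- `p ↦ α (1 + p)` on `a`, extended by `0`. -/
def ofOnePlus (a : Set R) (α : Rˣ → ℂ) (p : R) : ℂ :=
  if h : p ∈ a ∧ IsUnit (1 + p) then α h.2.unit else 0

theorem ofOnePlus_eq_zero {a : Set R} {α : Rˣ → ℂ} {p : R} (hp : p ∉ a) :
    ofOnePlus a α p = 0 :=
  dif_neg fun h => hp h.1

theorem ofOnePlus_eq_ite {a : Set R} {α : Rˣ → ℂ} {t : Rˣ} {p : R} (ht : (t : R) = 1 + p) :
    ofOnePlus a α p = if t ∈ unitsOf a then α t else 0 := by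
  have hmem : t ∈ unitsOf a ↔ p ∈ a := by rw [mem_unitsOf_iff, ht, add_sub_cancel_left]
  have hunit : IsUnit (1 + p) := ht ▸ t.isUnit
  by_cases hp : p ∈ a
  · rw [ofOnePlus, dif_pos ⟨hp, hunit⟩, if_pos (hmem.2 hp)]
    congr
    exact Units.ext (by rw [IsUnit.unit_spec, ht])
  · rw [ofOnePlus_eq_zero hp, if_neg (mt hmem.1 hp)]

theorem IsSCF.restrict {g a b : Set R} {β : Rˣ → ℂ} (hab : a ⊆ b) (hβ : IsSCF g b β) :
    IsSCF g a β :=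
  fun x hx u hu v hv w z hw huxv hz =>
    hβ x (hab hx) u hu v (unitsOf_mono hab hv) w z hw (hab huxv) hz

/-- The case `v = 1` of the superclass condition. -/
theorem IsSCF.ofOnePlus_val_mul [Finite R] {g : NonUnitalSubsemiring R} {a : AddSubmonoid R}
    (hnil : ∀ x ∈ a, IsNilpotent x) (hleft : ∀ x ∈ g, ∀ y ∈ a, x * y ∈ a) {α : Rˣ → ℂ}
    (hα : IsSCF g a α) {u : Rˣ} (hu : u ∈ unitsOf g) (p : R) :
    ofOnePlus a α (u * p) = ofOnePlus a α p := by
  by_cases hp : p ∈ a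
  · have hup : (u : R) * p ∈ a := (val_mul_mem_iff hleft hu).2 hp
    obtain ⟨s, hs⟩ : ∃ s : Rˣ, (s : R) = 1 + p := ⟨_, (hnil p hp).isUnit_one_add.unit_spec⟩
    obtain ⟨t, ht⟩ : ∃ t : Rˣ, (t : R) = 1 + u * p := ⟨_, (hnil _ hup).isUnit_one_add.unit_spec⟩
    rw [ofOnePlus_eq_ite hs, ofOnePlus_eq_ite ht, if_pos, if_pos]
    · exact (hα p hp u hu 1 ⟨0, a.zero_mem, by simp⟩ s t hs (by simpa using hup)
        (by simpa using ht)).symm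
    · exact mem_unitsOf_iff.2 (by simpa [hs] using hp)
    · exact mem_unitsOf_iff.2 (by simpa [ht] using hup)
  · rw [ofOnePlus_eq_zero hp, ofOnePlus_eq_zero (mt (val_mul_mem_iff hleft hu).1 hp)]

theorem indSCF_eq_sum_ofOnePlus [Fintype R] (a b : Set R) (α : Rˣ → ℂ) {w : Rˣ} {y : R}
    (hw : (w : R) = 1 + y) :
    indSCF a b α w = ((unitsOf a).ncard : ℂ)⁻¹ *
      ∑ x : Rˣ, if x ∈ unitsOf b then ofOnePlus a α (x * y * (x⁻¹ : Rˣ)) else 0 := by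
  refine congrArg _ (Fintype.sum_congr _ _ fun x => ?_)
  have hconj : ((x * w * x⁻¹ : Rˣ) : R) = 1 + x * y * (x⁻¹ : Rˣ) := by
    rw [Units.val_mul, Units.val_mul, hw, mul_add, mul_one, add_mul, Units.mul_inv]
  by_cases hx : x ∈ unitsOf b
  · simp only [hx, true_and, if_true, ofOnePlus_eq_ite hconj]
  · simp only [hx, false_and, if_false]

theorem IsSCF.indSCF_eq_sum [Fintype R] {g : NonUnitalSubsemiring R} {a : AddSubmonoid R}
    {b : Set R} (hnil : ∀ x ∈ a, IsNilpotent x) (hleft : ∀ x ∈ g, ∀ y ∈ a, x * y ∈ a)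
    (hbg : b ⊆ g) {α : Rˣ → ℂ} (hα : IsSCF g a α) {w : Rˣ} {y : R} (hw : (w : R) = 1 + y) :
    indSCF a b α w = ((unitsOf (a : Set R)).ncard : ℂ)⁻¹ *
      ∑ x : Rˣ, if x ∈ unitsOf b then ofOnePlus a α (y * (x⁻¹ : Rˣ)) else 0 := by
  rw [indSCF_eq_sum_ofOnePlus _ _ _ hw]
  refine congrArg _ (Fintype.sum_congr _ _ fun x => ?_)
  by_cases hx : x ∈ unitsOf b
  · rw [if_pos hx, if_pos hx, mul_assoc,
      IsSCF.ofOnePlus_val_mul hnil hleft hα (unitsOf_mono hbg hx)]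
  · rw [if_neg hx, if_neg hx]

theorem IsSCF.indSCF [Fintype R] {g b : NonUnitalSubsemiring R} {a : AddSubmonoid R}
    (hnil : ∀ x ∈ a, IsNilpotent x) (hleft : ∀ x ∈ g, ∀ y ∈ a, x * y ∈ a) (hbg : b ≤ g)
    {α : Rˣ → ℂ} (hα : IsSCF g a α) : IsSCF g b (indSCF a b α) := by
  intro y _ u hu v hv w z hw _ hz
  rw [IsSCF.indSCF_eq_sum hnil hleft hbg hα hw, IsSCF.indSCF_eq_sum hnil hleft hbg hα hz]
  refine congrArg _ ?_
  calc ∑ x : Rˣ, (if x ∈ unitsOf b then ofOnePlus a α (y * (x⁻¹ : Rˣ)) else 0)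
      = ∑ x : Rˣ, if x ∈ unitsOf b then ofOnePlus a α (y * v * (x⁻¹ : Rˣ)) else 0 := by
        refine Fintype.sum_equiv (Equiv.mulRight v) _ _ fun x => ?_
        have hxv : x * v ∈ unitsOf b ↔ x ∈ unitsOf b :=
          (onePlusSubgroup b).mul_mem_cancel_right hv
        simp only [Equiv.coe_mulRight, hxv, mul_inv_rev, Units.val_mul, mul_assoc,
          Units.mul_inv_cancel_left]
    _ = ∑ x : Rˣ, if x ∈ unitsOf b then ofOnePlus a α (u * y * v * (x⁻¹ : Rˣ)) else 0 := by
        simp only [mul_assoc, IsSCF.ofOnePlus_val_mul hnil hleft hα hu]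

end AlgebraGroup

open AlgebraGroup in
theorem ind_res_superclass_functions_general
    (R : Type) [Ring R] [Fintype R]
    (g a b : Set R)
    (hg0 : (0 : R) ∈ g) (hgadd : ∀ x ∈ g, ∀ y ∈ g, x + y ∈ g)
    (hgmul : ∀ x ∈ g, ∀ y ∈ g, x * y ∈ g)
    (hnil : ∃ m : ℕ, ∀ f : Fin (m + 1) → R, (∀ i, f i ∈ g) → (List.ofFn f).prod = 0)
    (hab : a ⊆ b)
    (hasub : a ⊆ g) (ha0 : (0 : R) ∈ a) (haadd : ∀ x ∈ a, ∀ y ∈ a, x + y ∈ a)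
    (haleft : ∀ x ∈ g, ∀ y ∈ a, x * y ∈ a)
    (hbsub : b ⊆ g) (hb0 : (0 : R) ∈ b) (hbadd : ∀ x ∈ b, ∀ y ∈ b, x + y ∈ b)
    (hbleft : ∀ x ∈ g, ∀ y ∈ b, x * y ∈ b) :
    (∀ α : Rˣ → ℂ, IsSCF g a α → IsSCF g b (indSCF a b α)) ∧
    (∀ β : Rˣ → ℂ, IsSCF g b β → IsSCF g a β) := by
  let gS : NonUnitalSubsemiring R :=
    { carrier := g, zero_mem' := hg0, add_mem' := fun hx hy => hgadd _ hx _ hy,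
      mul_mem' := fun hx hy => hgmul _ hx _ hy }
  let aS : AddSubmonoid R :=
    { carrier := a, zero_mem' := ha0, add_mem' := fun hx hy => haadd _ hx _ hy }
  let bS : NonUnitalSubsemiring R :=
    { carrier := b, zero_mem' := hb0, add_mem' := fun hx hy => hbadd _ hx _ hy,
      mul_mem' := fun hx hy => hbleft _ (hbsub hx) _ hy }
  have hanil : ∀ x ∈ aS, IsNilpotent x := fun _ hx =>
    isNilpotent_of_forall_prod_eq_zero hnil (hasub hx)
  exact ⟨fun _ hα => IsSCF.indSCF (g := gS) (b := bS) hanil haleft hbsub hα,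
    fun _ => IsSCF.restrict hab⟩

/-- For left ideal subgroups `A = 1 + a ⊆ B = 1 + b` of an algebra group `G = 1 + g`,
induction sends superclass functions of `A` to superclass functions of `B`, and restriction
sends superclass functions of `B` to superclass functions of `A`. -/
theorem ind_res_superclass_functions
    (F R : Type) [Field F] [Fintype F] [Ring R] [Fintype R] [Algebra F R]
    (g a b : Set R)
    (hg0 : (0 : R) ∈ g) (hgadd : ∀ x ∈ g, ∀ y ∈ g, x + y ∈ g)
    (hgneg : ∀ x ∈ g, -x ∈ g) (hgsmul : ∀ (c : F), ∀ x ∈ g, c • x ∈ g)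
    (hgmul : ∀ x ∈ g, ∀ y ∈ g, x * y ∈ g)
    (hnil : ∃ m : ℕ, ∀ f : Fin (m + 1) → R, (∀ i, f i ∈ g) → (List.ofFn f).prod = 0)
    (hab : a ⊆ b)
    (hasub : a ⊆ g) (ha0 : (0 : R) ∈ a) (haadd : ∀ x ∈ a, ∀ y ∈ a, x + y ∈ a)
    (haneg : ∀ x ∈ a, -x ∈ a) (hasmul : ∀ (c : F), ∀ x ∈ a, c • x ∈ a)
    (haleft : ∀ x ∈ g, ∀ y ∈ a, x * y ∈ a)
    (hbsub : b ⊆ g) (hb0 : (0 : R) ∈ b) (hbadd : ∀ x ∈ b, ∀ y ∈ b, x + y ∈ b)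
    (hbneg : ∀ x ∈ b, -x ∈ b) (hbsmul : ∀ (c : F), ∀ x ∈ b, c • x ∈ b)
    (hbleft : ∀ x ∈ g, ∀ y ∈ b, x * y ∈ b) :
    (∀ α : Rˣ → ℂ, IsSCF g a α → IsSCF g b (indSCF a b α)) ∧
    (∀ β : Rˣ → ℂ, IsSCF g b β → IsSCF g a β) :=
  ind_res_superclass_functions_general R g a b hg0 hgadd hgmul hnil hab hasub ha0 haadd haleft hbsub
    hb0 hbadd hbleft
end
end

section
/- Let G = 1 + 𝔤 be an algebra group over F_q, H = 1 + 𝔥 a left ideal subgroup, θ : (F_q, +) → ℂ^× a nontrivial homomorphism, and for λ ∈ 𝔥^* define the supercharacter χ_λ = (|Gλ| / |GλH|) Σ_{μ ∈ GλH} θ ∘ μ ∘ f, where f(1+x) = x and (gμh)(x) = μ(g⁻¹xh⁻¹). Then for every g ∈ G, the conjugate function (χ_λ)^g equals χ_{λ^g}, where λ^g(x) = λ(gxg⁻¹). In particular (χ_λ)^g is a supercharacter of H^g. -/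
open scoped Classical

noncomputable section

/-- The two-sided orbit `G λ H` of a functional `λ` on the left ideal `h`, recorded as
functions vanishing off `h`: `(u λ v)(x) = λ (u⁻¹ x v⁻¹)`. -/
def biOrb {F R : Type} [Zero F] [Ring R] (g h : Set R) (lam : R → F) : Set (R → F) :=
  {μ | ∃ u ∈ unitsOf g, ∃ v ∈ unitsOf h,
    μ = fun x => if x ∈ h then lam (((u⁻¹ : Rˣ) : R) * x * ((v⁻¹ : Rˣ) : R)) else 0}

/-- The left orbit `G λ` of a functional `λ` on the left ideal `h`. -/
def leftOrb {F R : Type} [Zero F] [Ring R] (g h : Set R) (lam : R → F) : Set (R → F) :=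
  {μ | ∃ u ∈ unitsOf g,
    μ = fun x => if x ∈ h then lam (((u⁻¹ : Rˣ) : R) * x) else 0}

/-- The supercharacter `χ_λ = (|Gλ|/|GλH|) ∑_{μ ∈ GλH} θ ∘ μ ∘ f` of the left ideal
subgroup `1 + h` of the algebra group `1 + g`, where `f(1+x) = x`. -/
def superchar {F R : Type} [Field F] [Fintype F] [Ring R] [Fintype R]
    (g h : Set R) (lam : R → F) (θ : AddChar F ℂ) : Rˣ → ℂ :=
  fun u => (((leftOrb g h lam).ncard : ℂ) / ((biOrb g h lam).ncard : ℂ)) *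
    ∑ μ ∈ (biOrb g h lam).toFinset, θ (μ ((u : R) - 1))

/-!
Conjugation `x ↦ u⁻¹ x u` by a unit is a ring automorphism of `R`, and supercharacters are
natural under ring isomorphisms `σ`: transporting `g`, `h` and `λ` along `σ` transports both
orbits `Gλ` and `GλH` by `μ ↦ μ ∘ σ⁻¹`, which preserves their sizes and the character sums.
For `u ∈ 1 + g` conjugation preserves `g`: since `R` is finite, `u⁻¹` is a positive power of `u`,
so `u⁻¹ ∈ 1 + g` as well, and `(1 + x) a (1 + y) ∈ g` for `x, y, a ∈ g`.
-/

section RingEquiv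

variable {R S : Type} [Ring R] [Ring S] (σ : R ≃+* S)

lemma mem_image_ringEquiv_iff {s : Set R} {y : S} : y ∈ σ '' s ↔ σ.symm y ∈ s :=
  Set.mem_image_equiv (f := σ.toEquiv)

lemma mapEquiv_mem_unitsOf_image_iff {s : Set R} {u : Rˣ} :
    Units.mapEquiv σ.toMulEquiv u ∈ unitsOf (σ '' s) ↔ u ∈ unitsOf s := by
  simp only [unitsOf, Set.mem_ofPred_eq, Set.exists_mem_image, Units.coe_mapEquiv]
  refine exists_congr fun x => and_congr_right fun _ => ?_
  rw [← map_one σ, ← map_add]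
  exact σ.injective.eq_iff

lemma exists_mem_unitsOf_image_iff {s : Set R} {p : Sˣ → Prop} :
    (∃ u ∈ unitsOf (σ '' s), p u) ↔ ∃ u ∈ unitsOf s, p (Units.mapEquiv σ.toMulEquiv u) := by
  simp only [(Units.mapEquiv σ.toMulEquiv).surjective.exists, mapEquiv_mem_unitsOf_image_iff]

lemma ite_mem_image_ringEquiv {F : Type} [Zero F] (h : Set R) (φ : R → F) (ψ : S → F)
    (hψ : ∀ x, ψ (σ x) = φ x) :
    (fun y => if y ∈ σ '' h then ψ y else 0) = (fun x => if x ∈ h then φ x else 0) ∘ σ.symm := by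
  funext y
  simp only [mem_image_ringEquiv_iff, Function.comp_apply, ← hψ, RingEquiv.apply_symm_apply]

lemma biOrb_image_ringEquiv {F : Type} [Zero F] (g h : Set R) (lam : R → F) :
    biOrb (σ '' g) (σ '' h) (lam ∘ σ.symm) = (· ∘ σ.symm) '' biOrb g h lam := by
  ext μ
  have key (u v : Rˣ) := ite_mem_image_ringEquiv σ h (fun x => lam (↑u⁻¹ * x * ↑v⁻¹))
    (fun y => (lam ∘ σ.symm) (↑(Units.mapEquiv σ.toMulEquiv u)⁻¹ * y *
      ↑(Units.mapEquiv σ.toMulEquiv v)⁻¹)) fun x => by simp [← map_inv]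
  simp only [biOrb, Set.mem_ofPred_eq, exists_mem_unitsOf_image_iff, key]
  constructor
  · rintro ⟨u, hu, v, hv, rfl⟩
    exact ⟨_, ⟨u, hu, v, hv, rfl⟩, rfl⟩
  · rintro ⟨_, ⟨u, hu, v, hv, rfl⟩, rfl⟩
    exact ⟨u, hu, v, hv, rfl⟩

lemma leftOrb_image_ringEquiv {F : Type} [Zero F] (g h : Set R) (lam : R → F) :
    leftOrb (σ '' g) (σ '' h) (lam ∘ σ.symm) = (· ∘ σ.symm) '' leftOrb g h lam := by
  ext μ
  have key (u : Rˣ) := ite_mem_image_ringEquiv σ h (fun x => lam (↑u⁻¹ * x))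
    (fun y => (lam ∘ σ.symm) (↑(Units.mapEquiv σ.toMulEquiv u)⁻¹ * y)) fun x => by simp [← map_inv]
  simp only [leftOrb, Set.mem_ofPred_eq, exists_mem_unitsOf_image_iff, key]
  constructor
  · rintro ⟨u, hu, rfl⟩
    exact ⟨_, ⟨u, hu, rfl⟩, rfl⟩
  · rintro ⟨_, ⟨u, hu, rfl⟩, rfl⟩
    exact ⟨u, hu, rfl⟩

lemma superchar_image_ringEquiv {F : Type} [Field F] [Fintype F] [Fintype R] [Fintype S]
    (g h : Set R) (lam : R → F) (θ : AddChar F ℂ) (w : Rˣ) :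
    superchar (σ '' g) (σ '' h) (lam ∘ σ.symm) θ (Units.mapEquiv σ.toMulEquiv w) =
      superchar g h lam θ w := by
  have hinj : Function.Injective (· ∘ σ.symm : (R → F) → S → F) :=
    σ.symm.surjective.injective_comp_right
  simp only [superchar, biOrb_image_ringEquiv, leftOrb_image_ringEquiv,
    Set.ncard_image_of_injective _ hinj, Set.toFinset_image, Finset.sum_image hinj.injOn]
  simp

end RingEquiv

section UnitsOf

variable {R : Type} [Ring R] {s : Set R}

lemma mul_mem_unitsOf (hadd : ∀ x ∈ s, ∀ y ∈ s, x + y ∈ s) (hmul : ∀ x ∈ s, ∀ y ∈ s, x * y ∈ s)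
    {u v : Rˣ} (hu : u ∈ unitsOf s) (hv : v ∈ unitsOf s) : u * v ∈ unitsOf s := by
  obtain ⟨x, hx, hux⟩ := hu
  obtain ⟨y, hy, hvy⟩ := hv
  exact ⟨x + y + x * y, hadd _ (hadd _ hx _ hy) _ (hmul _ hx _ hy), by
    rw [Units.val_mul, hux, hvy]; noncomm_ring⟩

lemma pow_succ_mem_unitsOf (hadd : ∀ x ∈ s, ∀ y ∈ s, x + y ∈ s)
    (hmul : ∀ x ∈ s, ∀ y ∈ s, x * y ∈ s) {u : Rˣ} (hu : u ∈ unitsOf s) (n : ℕ) :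
    u ^ (n + 1) ∈ unitsOf s := by
  induction n with
  | zero => simpa using hu
  | succ n ih => exact pow_succ u (n + 1) ▸ mul_mem_unitsOf hadd hmul ih hu

lemma inv_mem_unitsOf [Finite R] (hadd : ∀ x ∈ s, ∀ y ∈ s, x + y ∈ s)
    (hmul : ∀ x ∈ s, ∀ y ∈ s, x * y ∈ s) {u : Rˣ} (hu : u ∈ unitsOf s) : u⁻¹ ∈ unitsOf s := by
  have hpos := orderOf_pos u
  have hinv : u ^ (2 * orderOf u - 2 + 1) = u⁻¹ := by
    rw [eq_inv_iff_mul_eq_one, ← pow_succ, show 2 * orderOf u - 2 + 1 + 1 = orderOf u * 2 by omega,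
      pow_mul, pow_orderOf_eq_one, one_pow]
  exact hinv ▸ pow_succ_mem_unitsOf hadd hmul hu _

lemma units_mul_mem (hadd : ∀ x ∈ s, ∀ y ∈ s, x + y ∈ s) (hmul : ∀ x ∈ s, ∀ y ∈ s, x * y ∈ s)
    {u : Rˣ} (hu : u ∈ unitsOf s) {a : R} (ha : a ∈ s) : ↑u * a ∈ s := by
  obtain ⟨x, hx, hux⟩ := hu
  rw [hux, add_mul, one_mul]
  exact hadd _ ha _ (hmul _ hx _ ha)

lemma mul_units_mem (hadd : ∀ x ∈ s, ∀ y ∈ s, x + y ∈ s) (hmul : ∀ x ∈ s, ∀ y ∈ s, x * y ∈ s)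
    {u : Rˣ} (hu : u ∈ unitsOf s) {a : R} (ha : a ∈ s) : a * ↑u ∈ s := by
  obtain ⟨x, hx, hux⟩ := hu
  rw [hux, mul_add, mul_one]
  exact hadd _ ha _ (hmul _ ha _ hx)

end UnitsOf

def Units.conjInvRingEquiv {R : Type} [Ring R] (u : Rˣ) : R ≃+* R where
  toFun x := ↑u⁻¹ * x * u
  invFun x := u * x * ↑u⁻¹
  left_inv x := by simp [mul_assoc]
  right_inv x := by simp [mul_assoc]
  map_mul' x y := by simp [mul_assoc]
  map_add' x y := by simp [mul_add, add_mul]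

lemma image_conjInvRingEquiv_eq_self {R : Type} [Ring R] [Finite R] {s : Set R}
    (hadd : ∀ x ∈ s, ∀ y ∈ s, x + y ∈ s) (hmul : ∀ x ∈ s, ∀ y ∈ s, x * y ∈ s)
    {u : Rˣ} (hu : u ∈ unitsOf s) : u.conjInvRingEquiv '' s = s := by
  have hu' := inv_mem_unitsOf hadd hmul hu
  have conj_mem {p q : Rˣ} (hp : p ∈ unitsOf s) (hq : q ∈ unitsOf s) {a : R} (ha : a ∈ s) :
      ↑p * a * ↑q ∈ s :=
    mul_units_mem hadd hmul hq (units_mul_mem hadd hmul hp ha)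
  ext a
  rw [mem_image_ringEquiv_iff]
  exact ⟨fun ha => by simpa [Units.conjInvRingEquiv, mul_assoc] using conj_mem hu' hu ha,
    conj_mem hu hu'⟩

theorem superchar_conj_general
    (F R : Type) [Field F] [Fintype F] [Ring R] [Fintype R] [Algebra F R]
    (g h : Set R)
    (hgadd : ∀ x ∈ g, ∀ y ∈ g, x + y ∈ g)
    (hgmul : ∀ x ∈ g, ∀ y ∈ g, x * y ∈ g)
    (lam : R →ₗ[F] F) (θ : AddChar F ℂ) :
    ∀ gu ∈ unitsOf g, ∀ w : Rˣ,
      superchar g h (⇑lam) θ (gu * w * gu⁻¹) =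
        superchar g ((fun x => ((gu⁻¹ : Rˣ) : R) * x * ((gu : Rˣ) : R)) '' h)
          (fun x => lam ((gu : R) * x * ((gu⁻¹ : Rˣ) : R))) θ w := by
  intro gu hgu w
  have hw : Units.mapEquiv gu.conjInvRingEquiv.toMulEquiv (gu * w * gu⁻¹) = w := by
    ext
    show ↑gu⁻¹ * ↑(gu * w * gu⁻¹) * ↑gu = (w : R)
    simp [mul_assoc]
  have key := superchar_image_ringEquiv gu.conjInvRingEquiv g h lam θ (gu * w * gu⁻¹)
  rw [image_conjInvRingEquiv_eq_self hgadd hgmul hgu, hw] at key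
  exact key.symm

/-- Conjugating the left-ideal supercharacter `χ_λ` by `g ∈ G` gives the supercharacter
`χ_{λ^g}` of the conjugate left ideal subgroup, where `λ^g(x) = λ (g x g⁻¹)`. -/
theorem superchar_conj
    (F R : Type) [Field F] [Fintype F] [Ring R] [Fintype R] [Algebra F R]
    (g h : Set R)
    (hg0 : (0 : R) ∈ g) (hgadd : ∀ x ∈ g, ∀ y ∈ g, x + y ∈ g)
    (hgneg : ∀ x ∈ g, -x ∈ g) (hgsmul : ∀ (c : F), ∀ x ∈ g, c • x ∈ g)
    (hgmul : ∀ x ∈ g, ∀ y ∈ g, x * y ∈ g)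
    (hnil : ∃ m : ℕ, ∀ f : Fin (m + 1) → R, (∀ i, f i ∈ g) → (List.ofFn f).prod = 0)
    (hhsub : h ⊆ g) (hh0 : (0 : R) ∈ h) (hhadd : ∀ x ∈ h, ∀ y ∈ h, x + y ∈ h)
    (hhneg : ∀ x ∈ h, -x ∈ h) (hhsmul : ∀ (c : F), ∀ x ∈ h, c • x ∈ h)
    (hhleft : ∀ x ∈ g, ∀ y ∈ h, x * y ∈ h)
    (lam : R →ₗ[F] F) (θ : AddChar F ℂ) (hθ : ∃ c : F, θ c ≠ 1) :
    ∀ gu ∈ unitsOf g, ∀ w : Rˣ,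
      superchar g h (⇑lam) θ (gu * w * gu⁻¹) =
        superchar g ((fun x => ((gu⁻¹ : Rˣ) : R) * x * ((gu : Rˣ) : R)) '' h)
          (fun x => lam ((gu : R) * x * ((gu⁻¹ : Rˣ) : R))) θ w :=
  superchar_conj_general F R g h hgadd hgmul lam θ
end
end

section
/- Let q be a power of an odd prime, let G ⊆ UT_{2n}(F_{q^k}) be a pattern group with algebra 𝔤, and let † be an algebra anti-involution of 𝔤 with (α e_{ij})† ∈ F_{q^k}^× e_{\bar j \bar i} (where \bar i = 2n+1−i). Set U = {u ∈ G : u† = u⁻¹}, H = {diag(h, h̃⁻¹) ∈ U : diag(h, I) ∈ G}, and N = {I + e : e strictly upper-right block, I + e ∈ U}. Then N is an abelian normal subgroup of U, H is a subgroup of U isomorphic to a pattern subgroup of UT_n via diag(h, h̃⁻¹) ↦ h, and U = N ⋊ H as an internal semidirect product. -/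
open scoped Classical Matrix

noncomputable section

/-- `2n × 2n` matrices indexed by `Fin n ⊕ Fin n`. -/
abbrev M2 (E : Type) (n : ℕ) : Type := Matrix (Fin n ⊕ Fin n) (Fin n ⊕ Fin n) E

/-- The position of an index in the linear order on `[2n]`. -/
def idx2 {n : ℕ} : Fin n ⊕ Fin n → ℕ :=
  Sum.elim Fin.val (fun j => n + j.val)

/-- The map `i ↦ 2n + 1 - i` on indices. -/
def bar2 {n : ℕ} : Fin n ⊕ Fin n → Fin n ⊕ Fin n :=
  Sum.elim (fun i => Sum.inr i.rev) (fun j => Sum.inl j.rev)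

/-- The pattern algebra `𝔤`: strictly upper-triangular matrices supported on the pattern `P`. -/
def patAlg (E : Type) [Field E] (n : ℕ) (P : Fin n ⊕ Fin n → Fin n ⊕ Fin n → Prop) :
    Set (M2 E n) :=
  {x | ∀ i j, x i j ≠ 0 → (P i j ∧ idx2 i < idx2 j)}

/-- The pattern group `G = 1 + 𝔤` at the level of matrices. -/
def patGrpM (E : Type) [Field E] (n : ℕ) (P : Fin n ⊕ Fin n → Fin n ⊕ Fin n → Prop) :
    Set (M2 E n) :=
  {x | (∀ i, x i i = 1) ∧ ∀ i j, i ≠ j → x i j ≠ 0 → (P i j ∧ idx2 i < idx2 j)}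

/-- The pattern group `G` as a set of units. -/
def patGrp (E : Type) [Field E] (n : ℕ) (P : Fin n ⊕ Fin n → Fin n ⊕ Fin n → Prop) :
    Set (M2 E n)ˣ :=
  {u | (u : M2 E n) ∈ patGrpM E n P}

/-- The group `U = {u ∈ G : u† = u⁻¹}` defined by the anti-involution `x ↦ d x`,
where `u† = 1 + d (u - 1)`. -/
def Ugrp (E : Type) [Field E] (n : ℕ) (P : Fin n ⊕ Fin n → Fin n ⊕ Fin n → Prop)
    (d : M2 E n → M2 E n) : Set (M2 E n)ˣ :=
  {u | u ∈ patGrp E n P ∧ (1 + d ((u : M2 E n) - 1)) * (u : M2 E n) = 1}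

/-- The abelian normal subgroup `N` of `U`: elements that are the identity outside of the
upper-right `n × n` block. -/
def Ngrp (E : Type) [Field E] (n : ℕ) (P : Fin n ⊕ Fin n → Fin n ⊕ Fin n → Prop)
    (d : M2 E n → M2 E n) : Set (M2 E n)ˣ :=
  {u | u ∈ Ugrp E n P d ∧ ∃ x : Matrix (Fin n) (Fin n) E,
    (u : M2 E n) = Matrix.fromBlocks 1 x 0 1}

/-- The subgroup `H = {diag(h, h̃⁻¹) : diag(h, I) ∈ G}`, where `h̃` is defined by
`diag(I, h̃) = diag(h, I)†`. -/
def Hgrp (E : Type) [Field E] (n : ℕ) (P : Fin n ⊕ Fin n → Fin n ⊕ Fin n → Prop)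
    (d : M2 E n → M2 E n) : Set (M2 E n)ˣ :=
  {u | ∃ h ht : Matrix (Fin n) (Fin n) E,
    (u : M2 E n) = Matrix.fromBlocks h 0 0 ht ∧
    Matrix.fromBlocks h 0 0 1 ∈ patGrpM E n P ∧
    (1 + d (Matrix.fromBlocks (h - 1) 0 0 0)) * Matrix.fromBlocks 1 0 0 ht = 1}

/-!
Write `g ∈ G` in `n × n` blocks as `[[a, b], [0, c]]`; taking the block-diagonal part
`g ↦ diag(a, c)` is multiplicative on `G`. Since `†` sends the entry `(i, j)` to `(j̄, ī)`, it swaps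
the two diagonal blocks and preserves the upper-right one. Hence the lower-right block of `g†` is
`h̃` for `h = a`, and `u† u = 1` gives `h̃ c = 1`: the block-diagonal part of a unitary `u` lies
in `H`. So on `U` the block-diagonal part is a retraction homomorphism onto `H` with kernel `N`,
which gives `U = N ⋊ H`. Conversely `diag(h, h̃⁻¹) = g (g†)⁻¹` for `g = diag(h, 1)` is unitary
because `g` commutes with `g† = diag(1, h̃)`.
-/

open Matrix

section AntiInvolution

variable {R : Type*} [Ring R]

structure IsAntiInvolutionOn (S : NonUnitalSubring R) (d : R → R) : Prop where
  mapsTo : ∀ x ∈ S, d x ∈ S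
  map_add : ∀ x ∈ S, ∀ y ∈ S, d (x + y) = d x + d y
  map_mul : ∀ x ∈ S, ∀ y ∈ S, d (x * y) = d y * d x
  map_map : ∀ x ∈ S, d (d x) = x

def dag (d : R → R) (g : R) : R := 1 + d (g - 1)

theorem NonUnitalSubring.exists_mul_one_add_eq_one {S : NonUnitalSubring R} {x : R} (hx : x ∈ S)
    (hnil : IsNilpotent x) : ∃ y ∈ S, (1 + y) * (1 + x) = 1 := by
  obtain ⟨N, hN⟩ := hnil
  have hpow : ∀ m : ℕ, (-x) ^ (m + 1) ∈ S := by
    intro m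
    induction m with
    | zero => simpa using S.neg_mem hx
    | succ m ih => rw [pow_succ]; exact S.mul_mem ih (S.neg_mem hx)
  refine ⟨∑ m ∈ Finset.range N, (-x) ^ (m + 1), S.sum_mem fun m _ => hpow m, ?_⟩
  have hgeom := geom_sum_mul_neg (-x) (N + 1)
  rw [Finset.sum_range_succ', pow_zero, sub_neg_eq_add, pow_succ, neg_pow, hN] at hgeom
  simpa [add_comm] using hgeom

namespace IsAntiInvolutionOn

variable {S : NonUnitalSubring R} {d : R → R} (hd : IsAntiInvolutionOn S d)
include hd

theorem map_zero : d 0 = 0 := by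
  simpa using hd.map_add 0 S.zero_mem 0 S.zero_mem

theorem map_sum {ι : Type*} (s : Finset ι) {f : ι → R} (hf : ∀ i ∈ s, f i ∈ S) :
    d (∑ i ∈ s, f i) = ∑ i ∈ s, d (f i) := by
  classical
  induction s using Finset.induction_on with
  | empty => simpa using hd.map_zero
  | insert a s has ih =>
    rw [Finset.sum_insert has, Finset.sum_insert has,
      hd.map_add _ (hf a (by simp)) _ (S.sum_mem fun i hi => hf i (by simp [hi])),
      ih fun i hi => hf i (by simp [hi])]

theorem dag_one : dag d 1 = 1 := by
  simp [dag, hd.map_zero]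

theorem dag_sub_one_mem {a : R} (ha : a - 1 ∈ S) : dag d a - 1 ∈ S := by
  simpa [dag] using hd.mapsTo _ ha

theorem dag_dag {a : R} (ha : a - 1 ∈ S) : dag d (dag d a) = a := by
  simp [dag, hd.map_map _ ha]

theorem dag_mul {a b : R} (ha : a - 1 ∈ S) (hb : b - 1 ∈ S) :
    dag d (a * b) = dag d b * dag d a := by
  have hab : a * b - 1 = (a - 1) * (b - 1) + ((a - 1) + (b - 1)) := by noncomm_ring
  rw [dag, dag, dag, hab, hd.map_add _ (S.mul_mem ha hb) _ (S.add_mem ha hb),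
    hd.map_mul _ ha _ hb, hd.map_add _ ha _ hb]
  noncomm_ring

theorem dag_mul_mul_self_eq_one {g k : R} (hg : g - 1 ∈ S) (hk : k - 1 ∈ S)
    (hgk : dag d g * k = 1) (hcomm : Commute g (dag d g)) : dag d (g * k) * (g * k) = 1 := by
  have hkg' : dag d k * g = 1 := by
    simpa [hd.dag_mul (hd.dag_sub_one_mem hg) hk, hd.dag_dag hg, hd.dag_one] using
      congrArg (dag d) hgk
  calc dag d (g * k) * (g * k) = dag d k * (g * dag d g) * k := by
        rw [hd.dag_mul hg hk, hcomm.eq]; noncomm_ring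
    _ = 1 := by rw [← mul_assoc, hkg', one_mul, hgk]

end IsAntiInvolutionOn

end AntiInvolution

section PatternAlgebra

variable {E : Type} [Field E] {n : ℕ} {P : Fin n ⊕ Fin n → Fin n ⊕ Fin n → Prop}

theorem bar2_bar2 (i : Fin n ⊕ Fin n) : bar2 (bar2 i) = i := by
  cases i <;> simp [bar2]

def patAlgSubring (hP : ∀ i j l, P i j → P j l → P i l) : NonUnitalSubring (M2 E n) where
  carrier := patAlg E n P
  zero_mem' := by simp [patAlg]
  add_mem' {x y} hx hy i j h := by
    by_cases hxij : x i j = 0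
    · exact hy i j (by simpa [hxij] using h)
    · exact hx i j hxij
  neg_mem' {x} hx i j h := hx i j (by simpa using h)
  mul_mem' {x y} hx hy i j h := by
    rw [mul_apply] at h
    obtain ⟨l, -, hl⟩ := Finset.exists_ne_zero_of_sum_ne_zero h
    obtain ⟨hil, hil'⟩ := hx i l (left_ne_zero_of_mul hl)
    obtain ⟨hlj, hlj'⟩ := hy l j (right_ne_zero_of_mul hl)
    exact ⟨hP i l j hil hlj, hil'.trans hlj'⟩

theorem idx2_add_le_of_pow_apply_ne_zero {x : M2 E n} (hx : x ∈ patAlg E n P) (m : ℕ)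
    {i j : Fin n ⊕ Fin n} (h : (x ^ m) i j ≠ 0) : idx2 i + m ≤ idx2 j := by
  induction m generalizing j with
  | zero =>
    obtain rfl : i = j := by_contra fun hij => h (by simp [one_apply_ne hij])
    simp
  | succ m ih =>
    rw [pow_succ, mul_apply] at h
    obtain ⟨l, -, hl⟩ := Finset.exists_ne_zero_of_sum_ne_zero h
    have := ih (left_ne_zero_of_mul hl)
    have := (hx l j (right_ne_zero_of_mul hl)).2
    omega

theorem isNilpotent_of_mem_patAlg {x : M2 E n} (hx : x ∈ patAlg E n P) : IsNilpotent x := by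
  refine ⟨2 * n, ext fun i j => by_contra fun h => ?_⟩
  have := idx2_add_le_of_pow_apply_ne_zero hx (2 * n) h
  cases j <;> simp [idx2] at this <;> omega

theorem mem_patGrpM_iff {g : M2 E n} : g ∈ patGrpM E n P ↔ g - 1 ∈ patAlg E n P := by
  refine ⟨fun hg i j h => ?_, fun hg => ⟨fun i => ?_, fun i j hij h => hg i j ?_⟩⟩
  · by_cases hij : i = j
    · subst hij; simp [hg.1 i] at h
    · exact hg.2 i j hij (by simpa [one_apply_ne hij] using h)
  · by_contra h
    exact lt_irrefl _ (hg i i (by simpa [sub_eq_zero] using h)).2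
  · simpa [one_apply_ne hij] using h

theorem toBlocks₂₁_eq_zero_of_mem_patAlg {x : M2 E n} (hx : x ∈ patAlg E n P) :
    x.toBlocks₂₁ = 0 := by
  ext i j
  by_contra h
  have := (hx (Sum.inr i) (Sum.inl j) h).2
  simp [idx2] at this
  omega

theorem toBlocks₂₁_eq_zero_of_mem_patGrpM {g : M2 E n} (hg : g ∈ patGrpM E n P) :
    g.toBlocks₂₁ = 0 := by
  have := congrFun₂ (toBlocks₂₁_eq_zero_of_mem_patAlg (mem_patGrpM_iff.1 hg))
  ext i j
  simpa [toBlocks₂₁] using this i j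

theorem isUnit_of_mem_patGrpM {g : M2 E n} (hg : g ∈ patGrpM E n P) : IsUnit g := by
  simpa using (isNilpotent_of_mem_patAlg (mem_patGrpM_iff.1 hg)).isUnit_one_add

variable (hP : ∀ i j l, P i j → P j l → P i l)
include hP

theorem mul_mem_patGrpM {a b : M2 E n} (ha : a ∈ patGrpM E n P) (hb : b ∈ patGrpM E n P) :
    a * b ∈ patGrpM E n P := by
  rw [mem_patGrpM_iff] at *
  have hab : a * b - 1 = (a - 1) * (b - 1) + ((a - 1) + (b - 1)) := by noncomm_ring
  rw [hab]
  exact (patAlgSubring hP).add_mem ((patAlgSubring hP).mul_mem ha hb)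
    ((patAlgSubring hP).add_mem ha hb)

theorem nonsing_inv_mem_patGrpM {g : M2 E n} (hg : g ∈ patGrpM E n P) : g⁻¹ ∈ patGrpM E n P := by
  rw [mem_patGrpM_iff] at hg
  obtain ⟨y, hy, hyg⟩ := NonUnitalSubring.exists_mul_one_add_eq_one (S := patAlgSubring hP) hg
    (isNilpotent_of_mem_patAlg hg)
  rw [add_sub_cancel] at hyg
  rwa [inv_eq_left_inv hyg, mem_patGrpM_iff, add_sub_cancel_left]

end PatternAlgebra

section Blocks

variable {E : Type} [Field E] {n : ℕ} {P : Fin n ⊕ Fin n → Fin n ⊕ Fin n → Prop}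
  {d : M2 E n → M2 E n}

theorem toBlocks₁₁_mul {x y : M2 E n} (hy : y.toBlocks₂₁ = 0) :
    (x * y).toBlocks₁₁ = x.toBlocks₁₁ * y.toBlocks₁₁ := by
  conv_lhs => rw [← fromBlocks_toBlocks x, ← fromBlocks_toBlocks y, hy, fromBlocks_multiply]
  simp

theorem toBlocks₂₂_mul {x y : M2 E n} (hx : x.toBlocks₂₁ = 0) :
    (x * y).toBlocks₂₂ = x.toBlocks₂₂ * y.toBlocks₂₂ := by
  conv_lhs => rw [← fromBlocks_toBlocks x, ← fromBlocks_toBlocks y, hx, fromBlocks_multiply]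
  simp

theorem fromBlocks_sub_one (a b c : Matrix (Fin n) (Fin n) E) :
    (fromBlocks a b 0 c : M2 E n) - 1 = fromBlocks (a - 1) b 0 (c - 1) := by
  ext (i | i) (j | j) <;> simp [one_apply]

def blockDiagPart (x : M2 E n) : M2 E n := fromBlocks x.toBlocks₁₁ 0 0 x.toBlocks₂₂

theorem blockDiagPart_one : blockDiagPart (1 : M2 E n) = 1 := by
  rw [blockDiagPart, ← fromBlocks_one]
  simp only [toBlocks_fromBlocks₁₁, toBlocks_fromBlocks₂₂]

theorem blockDiagPart_mul {x y : M2 E n} (hx : x.toBlocks₂₁ = 0) (hy : y.toBlocks₂₁ = 0) :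
    blockDiagPart (x * y) = blockDiagPart x * blockDiagPart y := by
  simp [blockDiagPart, fromBlocks_multiply, toBlocks₁₁_mul hy, toBlocks₂₂_mul hx]

theorem blockDiagPart_blockDiagPart (x : M2 E n) :
    blockDiagPart (blockDiagPart x) = blockDiagPart x := by
  simp [blockDiagPart]

end Blocks

section SupportReflection

variable {E : Type} [Field E] {n : ℕ} {P : Fin n ⊕ Fin n → Fin n ⊕ Fin n → Prop}
  {d : M2 E n → M2 E n}

def ReflectsSupport (d : M2 E n → M2 E n) (A : Set (M2 E n)) : Prop :=
  ∀ x ∈ A, ∀ i j, x (bar2 j) (bar2 i) = 0 → d x i j = 0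

theorem reflectsSupport_patAlg (hP : ∀ i j l, P i j → P j l → P i l)
    (hd : IsAntiInvolutionOn (patAlgSubring hP) d)
    (hsingle : ∀ i j, P i j → idx2 i < idx2 j → ∀ α : E, α ≠ 0 →
      ∃ β : E, β ≠ 0 ∧ d (single i j α) = single (bar2 j) (bar2 i) β) :
    ReflectsSupport d (patAlg E n P) := by
  intro x hx i j hij
  have hmem : ∀ k l, single k l (x k l) ∈ patAlg E n P := by
    intro k l a b h
    obtain ⟨rfl, rfl⟩ : k = a ∧ l = b := by_contra fun hne => h (single_apply_of_ne _ _ _ _ _ hne)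
    exact hx k l (by simpa using h)
  have hentry : ∀ k l, d (single k l (x k l)) i j = 0 := by
    intro k l
    by_cases hkl : x k l = 0
    · simp [hkl, hd.map_zero]
    obtain ⟨β, -, hβ⟩ := hsingle k l (hx k l hkl).1 (hx k l hkl).2 _ hkl
    rw [hβ, single_apply_of_ne]
    rintro ⟨rfl, rfl⟩
    exact hkl (by simpa [bar2_bar2] using hij)
  rw [matrix_eq_sum_single x,
    hd.map_sum _ fun k _ => (patAlgSubring hP).sum_mem fun l _ => hmem k l, Matrix.sum_apply]
  refine Finset.sum_eq_zero fun k _ => ?_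
  rw [hd.map_sum _ fun l _ => hmem k l, Matrix.sum_apply]
  exact Finset.sum_eq_zero fun l _ => hentry k l

namespace ReflectsSupport

variable (hr : ReflectsSupport d (patAlg E n P)) {x : M2 E n} (hx : x ∈ patAlg E n P)
include hr hx

theorem toBlocks₁₁_eq_zero (h : x.toBlocks₂₂ = 0) : (d x).toBlocks₁₁ = 0 := by
  ext a b
  exact hr x hx _ _ (congrFun₂ h b.rev a.rev)

theorem toBlocks₁₂_eq_zero (h : x.toBlocks₁₂ = 0) : (d x).toBlocks₁₂ = 0 := by
  ext a b
  exact hr x hx _ _ (congrFun₂ h b.rev a.rev)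

theorem toBlocks₂₂_eq_zero (h : x.toBlocks₁₁ = 0) : (d x).toBlocks₂₂ = 0 := by
  ext a b
  exact hr x hx _ _ (congrFun₂ h b.rev a.rev)

end ReflectsSupport

end SupportReflection

section UnitaryGroup

variable {E : Type} [Field E] {n : ℕ} {P : Fin n ⊕ Fin n → Fin n ⊕ Fin n → Prop}
  {d : M2 E n → M2 E n}

theorem mem_Ugrp_iff {u : (M2 E n)ˣ} :
    u ∈ Ugrp E n P d ↔ ↑u ∈ patGrpM E n P ∧ dag d ↑u * ↑u = 1 :=
  Iff.rfl

theorem coe_inv_of_mem_Ugrp {u : (M2 E n)ˣ} (hu : u ∈ Ugrp E n P d) : ↑u⁻¹ = dag d ↑u :=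
  Units.inv_eq_of_mul_eq_one_left hu.2

variable {hP : ∀ i j l, P i j → P j l → P i l} (hd : IsAntiInvolutionOn (patAlgSubring hP) d)
include hd

theorem dag_mem_patGrpM {g : M2 E n} (hg : g ∈ patGrpM E n P) : dag d g ∈ patGrpM E n P :=
  mem_patGrpM_iff.2 (hd.dag_sub_one_mem (mem_patGrpM_iff.1 hg))

theorem one_mem_Ugrp : (1 : (M2 E n)ˣ) ∈ Ugrp E n P d := by
  refine mem_Ugrp_iff.2 ⟨mem_patGrpM_iff.2 ?_, ?_⟩
  · rw [Units.val_one, sub_self]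
    exact (patAlgSubring hP).zero_mem
  · rw [Units.val_one, hd.dag_one, one_mul]

theorem mul_mem_Ugrp {u v : (M2 E n)ˣ} (hu : u ∈ Ugrp E n P d) (hv : v ∈ Ugrp E n P d) :
    u * v ∈ Ugrp E n P d := by
  obtain ⟨hu₁, hu₂⟩ := mem_Ugrp_iff.1 hu
  obtain ⟨hv₁, hv₂⟩ := mem_Ugrp_iff.1 hv
  refine mem_Ugrp_iff.2 ⟨?_, ?_⟩
  · rw [Units.val_mul]
    exact mul_mem_patGrpM hP hu₁ hv₁
  · rw [Units.val_mul, hd.dag_mul (mem_patGrpM_iff.1 hu₁) (mem_patGrpM_iff.1 hv₁)]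
    calc dag d ↑v * dag d ↑u * (↑u * ↑v) = dag d ↑v * (dag d ↑u * ↑u) * ↑v := by noncomm_ring
      _ = 1 := by rw [hu₂, mul_one, hv₂]

theorem inv_mem_Ugrp {u : (M2 E n)ˣ} (hu : u ∈ Ugrp E n P d) : u⁻¹ ∈ Ugrp E n P d := by
  have hu₁ := mem_patGrpM_iff.1 hu.1
  refine mem_Ugrp_iff.2 ⟨?_, ?_⟩
  · rw [coe_inv_of_mem_Ugrp hu]
    exact dag_mem_patGrpM hd hu.1
  · rw [coe_inv_of_mem_Ugrp hu, hd.dag_dag hu₁, ← coe_inv_of_mem_Ugrp hu, u.mul_inv]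

end UnitaryGroup

section DiagonalPart

variable {E : Type} [Field E] {n : ℕ} {P : Fin n ⊕ Fin n → Fin n ⊕ Fin n → Prop}
  {d : M2 E n → M2 E n}

theorem fromBlocks_mem_patGrpM_iff (h : Matrix (Fin n) (Fin n) E) :
    fromBlocks h 0 0 1 ∈ patGrpM E n P ↔
      (∀ i, h i i = 1) ∧ ∀ a b, a ≠ b → h a b ≠ 0 → P (Sum.inl a) (Sum.inl b) ∧ a < b := by
  constructor
  · rintro ⟨hdiag, hoff⟩
    refine ⟨fun i => by simpa using hdiag (Sum.inl i), fun a b hab hne => ?_⟩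
    simpa [idx2] using hoff (Sum.inl a) (Sum.inl b) (by simpa using hab) (by simpa using hne)
  · rintro ⟨hdiag, hoff⟩
    refine ⟨by rintro (i | i) <;> simp [hdiag], ?_⟩
    rintro (a | a) (b | b) hab hne
    · simpa [idx2] using hoff a b (by simpa using hab) (by simpa using hne)
    all_goals simp_all [one_apply]

theorem fromBlocks_toBlocks₁₁_mem_patGrpM {g : M2 E n} (hg : g ∈ patGrpM E n P) :
    fromBlocks g.toBlocks₁₁ 0 0 1 ∈ patGrpM E n P := by
  obtain ⟨hdiag, hoff⟩ := hg
  refine (fromBlocks_mem_patGrpM_iff _).2 ⟨fun i => hdiag _, fun a b hab hne => ?_⟩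
  simpa [idx2] using hoff (Sum.inl a) (Sum.inl b) (by simpa using hab) hne

def tilde (d : M2 E n → M2 E n) (h : Matrix (Fin n) (Fin n) E) : Matrix (Fin n) (Fin n) E :=
  (dag d (fromBlocks h 0 0 1)).toBlocks₂₂

theorem eq_of_mem_Hgrp_of_toBlocks₁₁_eq {u v : (M2 E n)ˣ} (hu : u ∈ Hgrp E n P d)
    (hv : v ∈ Hgrp E n P d) (heq : (u : M2 E n).toBlocks₁₁ = (v : M2 E n).toBlocks₁₁) : u = v := by
  obtain ⟨h, ht, hu, -, hht⟩ := hu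
  obtain ⟨h', ht', hv, -, hht'⟩ := hv
  rw [hu, hv, toBlocks_fromBlocks₁₁, toBlocks_fromBlocks₁₁] at heq
  subst heq
  obtain ⟨-, -, -, rfl⟩ := fromBlocks_inj.1 (left_inv_eq_right_inv (mul_eq_one_comm.1 hht) hht')
  exact Units.ext (hu.trans hv.symm)

variable {hP : ∀ i j l, P i j → P j l → P i l} (hd : IsAntiInvolutionOn (patAlgSubring hP) d)
  (hr : ReflectsSupport d (patAlg E n P))
include hd hr

theorem dag_fromBlocks {h : Matrix (Fin n) (Fin n) E} (hh : fromBlocks h 0 0 1 ∈ patGrpM E n P) :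
    dag d (fromBlocks h 0 0 1) = fromBlocks 1 0 0 (tilde d h) := by
  have hx := mem_patGrpM_iff.1 hh
  rw [fromBlocks_sub_one, sub_self] at hx
  have hdx : d (fromBlocks (h - 1) 0 0 0) =
      fromBlocks 0 0 0 (d (fromBlocks (h - 1) 0 0 0)).toBlocks₂₂ := by
    conv_lhs => rw [← fromBlocks_toBlocks (d _)]
    rw [hr.toBlocks₁₁_eq_zero hx (toBlocks_fromBlocks₂₂ _ _ _ _),
      hr.toBlocks₁₂_eq_zero hx (toBlocks_fromBlocks₁₂ _ _ _ _),
      toBlocks₂₁_eq_zero_of_mem_patAlg (hd.mapsTo _ hx)]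
  rw [tilde, dag, fromBlocks_sub_one, sub_self, hdx, ← fromBlocks_one, fromBlocks_add]
  simp

theorem toBlocks₂₂_dag {g : M2 E n} (hg : g ∈ patGrpM E n P) :
    (dag d g).toBlocks₂₂ = tilde d g.toBlocks₁₁ := by
  set g' : M2 E n := fromBlocks g.toBlocks₁₁ 0 0 1
  have hx := mem_patGrpM_iff.1 hg
  have hx' := mem_patGrpM_iff.1 (fromBlocks_toBlocks₁₁_mem_patGrpM hg)
  have hdiff : g - g' ∈ patAlg E n P := by
    have := (patAlgSubring hP).sub_mem hx hx'
    rwa [sub_sub_sub_cancel_right] at this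
  have h11 : (g - g').toBlocks₁₁ = 0 := by
    ext a b
    simp [g', toBlocks₁₁]
  have hsplit : d (g - 1) = d (g' - 1) + d (g - g') := by
    rw [← hd.map_add _ hx' _ hdiff]
    congr 1
    abel
  have := hr.toBlocks₂₂_eq_zero hdiff h11
  ext a b
  simpa [tilde, dag, hsplit, toBlocks₂₂, g'] using congrFun₂ this a b

theorem mem_Hgrp_iff {u : (M2 E n)ˣ} :
    u ∈ Hgrp E n P d ↔ ∃ h ht : Matrix (Fin n) (Fin n) E, (u : M2 E n) = fromBlocks h 0 0 ht ∧
      fromBlocks h 0 0 1 ∈ patGrpM E n P ∧ tilde d h * ht = 1 := by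
  refine exists₂_congr fun h ht => and_congr_right fun _ => and_congr_right fun hh => ?_
  rw [show (1 : M2 E n) + d (fromBlocks (h - 1) 0 0 0) = dag d (fromBlocks h 0 0 1) by
      rw [dag, fromBlocks_sub_one, sub_self],
    dag_fromBlocks hd hr hh, fromBlocks_multiply, ← fromBlocks_one, fromBlocks_inj]
  simp

theorem Hgrp_subset_Ugrp : Hgrp E n P d ⊆ Ugrp E n P d := by
  intro u hu
  obtain ⟨h, ht, hu, hh, hht⟩ := (mem_Hgrp_iff hd hr).1 hu
  have hdag := dag_fromBlocks hd hr hh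
  have hinv : dag d (fromBlocks h 0 0 1) * fromBlocks 1 0 0 ht = 1 := by
    rw [hdag, fromBlocks_multiply, ← fromBlocks_one]
    simp [hht]
  have hk : (fromBlocks 1 0 0 ht : M2 E n) ∈ patGrpM E n P := by
    rw [← inv_eq_right_inv hinv]
    exact nonsing_inv_mem_patGrpM hP (dag_mem_patGrpM hd hh)
  have hcomm : Commute (fromBlocks h 0 0 1 : M2 E n) (dag d (fromBlocks h 0 0 1)) := by
    rw [hdag, Commute, SemiconjBy, fromBlocks_multiply, fromBlocks_multiply]
    simp
  have hu' : (u : M2 E n) = fromBlocks h 0 0 1 * fromBlocks 1 0 0 ht := by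
    rw [hu, fromBlocks_multiply]
    simp
  refine mem_Ugrp_iff.2 ⟨hu' ▸ mul_mem_patGrpM hP hh hk, ?_⟩
  rw [hu']
  exact hd.dag_mul_mul_self_eq_one (mem_patGrpM_iff.1 hh) (mem_patGrpM_iff.1 hk) hinv hcomm

theorem blockDiagPart_mem_Hgrp {u w : (M2 E n)ˣ} (hu : u ∈ Ugrp E n P d)
    (hw : (w : M2 E n) = blockDiagPart ↑u) : w ∈ Hgrp E n P d := by
  obtain ⟨hu₁, hu₂⟩ := mem_Ugrp_iff.1 hu
  refine (mem_Hgrp_iff hd hr).2 ⟨_, _, hw, fromBlocks_toBlocks₁₁_mem_patGrpM hu₁, ?_⟩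
  have hdag : (dag d ↑u).toBlocks₂₁ = 0 :=
    toBlocks₂₁_eq_zero_of_mem_patGrpM (dag_mem_patGrpM hd hu₁)
  rw [← toBlocks₂₂_dag hd hr hu₁, ← toBlocks₂₂_mul hdag, hu₂]
  ext i j
  simp [toBlocks₂₂, one_apply]

theorem mem_Hgrp_iff_blockDiagPart {u : (M2 E n)ˣ} :
    u ∈ Hgrp E n P d ↔ u ∈ Ugrp E n P d ∧ blockDiagPart (u : M2 E n) = u := by
  refine ⟨fun hu => ⟨Hgrp_subset_Ugrp hd hr hu, ?_⟩,
    fun hu => blockDiagPart_mem_Hgrp hd hr hu.1 hu.2.symm⟩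
  obtain ⟨h, ht, hu, -⟩ := hu
  simp [hu, blockDiagPart]

theorem exists_mem_Hgrp_toBlocks₁₁_eq_iff (h : Matrix (Fin n) (Fin n) E) :
    (∃ u ∈ Hgrp E n P d, (u : M2 E n).toBlocks₁₁ = h) ↔ fromBlocks h 0 0 1 ∈ patGrpM E n P := by
  refine ⟨fun ⟨u, ⟨h', ht, hu, hh, _⟩, hu₁₁⟩ => ?_, fun hh => ?_⟩
  · rwa [← hu₁₁, hu, toBlocks_fromBlocks₁₁]
  have htilde : IsUnit (tilde d h) := by
    have := isUnit_of_mem_patGrpM (dag_mem_patGrpM hd hh)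
    rw [dag_fromBlocks hd hr hh] at this
    exact (isUnit_fromBlocks_zero₂₁.1 this).2
  obtain ⟨u, hu⟩ : IsUnit (fromBlocks h 0 0 (tilde d h)⁻¹ : M2 E n) :=
    isUnit_fromBlocks_zero₂₁.2
      ⟨(isUnit_fromBlocks_zero₂₁.1 (isUnit_of_mem_patGrpM hh)).1, isUnit_nonsing_inv_iff.2 htilde⟩
  refine ⟨u, (mem_Hgrp_iff hd hr).2 ⟨h, _, hu, hh, ?_⟩, by rw [hu, toBlocks_fromBlocks₁₁]⟩
  exact mul_nonsing_inv _ ((isUnit_iff_isUnit_det _).1 htilde)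

end DiagonalPart

section SemidirectProduct

variable {E : Type} [Field E] {n : ℕ} {P : Fin n ⊕ Fin n → Fin n ⊕ Fin n → Prop}
  {d : M2 E n → M2 E n}

theorem blockDiagPart_coe_mul {u v : (M2 E n)ˣ} (hu : (u : M2 E n) ∈ patGrpM E n P)
    (hv : (v : M2 E n) ∈ patGrpM E n P) :
    blockDiagPart (↑(u * v) : M2 E n) = blockDiagPart ↑u * blockDiagPart ↑v := by
  rw [Units.val_mul]
  exact blockDiagPart_mul (toBlocks₂₁_eq_zero_of_mem_patGrpM hu)
    (toBlocks₂₁_eq_zero_of_mem_patGrpM hv)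

theorem mem_Ngrp_iff {u : (M2 E n)ˣ} :
    u ∈ Ngrp E n P d ↔ u ∈ Ugrp E n P d ∧ blockDiagPart (u : M2 E n) = 1 := by
  refine ⟨fun ⟨hu, x, hx⟩ => ⟨hu, by simp [hx, blockDiagPart]⟩, fun ⟨hu, hbd⟩ => ⟨hu, ?_⟩⟩
  rw [blockDiagPart, ← fromBlocks_one, fromBlocks_inj] at hbd
  obtain ⟨h₁₁, -, -, h₂₂⟩ := hbd
  refine ⟨(u : M2 E n).toBlocks₁₂, ?_⟩
  conv_lhs => rw [← fromBlocks_toBlocks (u : M2 E n)]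
  rw [h₁₁, h₂₂, toBlocks₂₁_eq_zero_of_mem_patGrpM hu.1]

theorem mul_comm_of_mem_Ngrp {a b : (M2 E n)ˣ} (ha : a ∈ Ngrp E n P d) (hb : b ∈ Ngrp E n P d) :
    a * b = b * a := by
  obtain ⟨-, x, hx⟩ := ha
  obtain ⟨-, y, hy⟩ := hb
  ext : 1
  simp [hx, hy, fromBlocks_multiply, add_comm]

theorem eq_one_of_mem_Ngrp_of_mem_Hgrp {u : (M2 E n)ˣ} (hN : u ∈ Ngrp E n P d)
    (hH : u ∈ Hgrp E n P d) : u = 1 := by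
  obtain ⟨-, x, hx⟩ := hN
  obtain ⟨h, ht, hh, -⟩ := hH
  obtain ⟨-, rfl, -, -⟩ := fromBlocks_inj.1 (hx.symm.trans hh)
  exact Units.ext (by rw [hx, fromBlocks_one, Units.val_one])

theorem toBlocks₁₁_coe_mul_of_mem_Hgrp (u : (M2 E n)ˣ) {v : (M2 E n)ˣ} (hv : v ∈ Hgrp E n P d) :
    (↑(u * v) : M2 E n).toBlocks₁₁ = (u : M2 E n).toBlocks₁₁ * (v : M2 E n).toBlocks₁₁ := by
  obtain ⟨h, ht, hv, -⟩ := hv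
  rw [Units.val_mul, toBlocks₁₁_mul (by rw [hv, toBlocks_fromBlocks₂₁])]

variable {hP : ∀ i j l, P i j → P j l → P i l} (hd : IsAntiInvolutionOn (patAlgSubring hP) d)
include hd

theorem blockDiagPart_coe_inv_mul {u : (M2 E n)ˣ} (hu : u ∈ Ugrp E n P d) :
    blockDiagPart (↑u⁻¹ : M2 E n) * blockDiagPart ↑u = 1 := by
  rw [← blockDiagPart_coe_mul (inv_mem_Ugrp hd hu).1 hu.1, inv_mul_cancel, Units.val_one,
    blockDiagPart_one]

theorem blockDiagPart_coe_mul_inv {u : (M2 E n)ˣ} (hu : u ∈ Ugrp E n P d) :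
    blockDiagPart (u : M2 E n) * blockDiagPart ↑u⁻¹ = 1 := by
  rw [← blockDiagPart_coe_mul hu.1 (inv_mem_Ugrp hd hu).1, mul_inv_cancel, Units.val_one,
    blockDiagPart_one]

theorem one_mem_Ngrp : (1 : (M2 E n)ˣ) ∈ Ngrp E n P d :=
  mem_Ngrp_iff.2 ⟨one_mem_Ugrp hd, blockDiagPart_one⟩

theorem mul_mem_Ngrp {a b : (M2 E n)ˣ} (ha : a ∈ Ngrp E n P d) (hb : b ∈ Ngrp E n P d) :
    a * b ∈ Ngrp E n P d := by
  obtain ⟨ha, ha'⟩ := mem_Ngrp_iff.1 ha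
  obtain ⟨hb, hb'⟩ := mem_Ngrp_iff.1 hb
  refine mem_Ngrp_iff.2 ⟨mul_mem_Ugrp hd ha hb, ?_⟩
  rw [blockDiagPart_coe_mul ha.1 hb.1, ha', hb', one_mul]

theorem inv_mem_Ngrp {a : (M2 E n)ˣ} (ha : a ∈ Ngrp E n P d) : a⁻¹ ∈ Ngrp E n P d := by
  obtain ⟨ha, ha'⟩ := mem_Ngrp_iff.1 ha
  refine mem_Ngrp_iff.2 ⟨inv_mem_Ugrp hd ha, ?_⟩
  simpa [ha'] using blockDiagPart_coe_inv_mul hd ha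

theorem conj_mem_Ngrp {u a : (M2 E n)ˣ} (hu : u ∈ Ugrp E n P d) (ha : a ∈ Ngrp E n P d) :
    u * a * u⁻¹ ∈ Ngrp E n P d := by
  obtain ⟨ha, ha'⟩ := mem_Ngrp_iff.1 ha
  have hua := mul_mem_Ugrp hd hu ha
  refine mem_Ngrp_iff.2 ⟨mul_mem_Ugrp hd hua (inv_mem_Ugrp hd hu), ?_⟩
  rw [blockDiagPart_coe_mul hua.1 (inv_mem_Ugrp hd hu).1, blockDiagPart_coe_mul hu.1 ha.1, ha',
    mul_one, blockDiagPart_coe_mul_inv hd hu]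

variable (hr : ReflectsSupport d (patAlg E n P))
include hr

theorem one_mem_Hgrp : (1 : (M2 E n)ˣ) ∈ Hgrp E n P d :=
  (mem_Hgrp_iff_blockDiagPart hd hr).2 ⟨one_mem_Ugrp hd, blockDiagPart_one⟩

theorem mul_mem_Hgrp {a b : (M2 E n)ˣ} (ha : a ∈ Hgrp E n P d) (hb : b ∈ Hgrp E n P d) :
    a * b ∈ Hgrp E n P d := by
  obtain ⟨ha, ha'⟩ := (mem_Hgrp_iff_blockDiagPart hd hr).1 ha
  obtain ⟨hb, hb'⟩ := (mem_Hgrp_iff_blockDiagPart hd hr).1 hb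
  refine (mem_Hgrp_iff_blockDiagPart hd hr).2 ⟨mul_mem_Ugrp hd ha hb, ?_⟩
  rw [blockDiagPart_coe_mul ha.1 hb.1, ha', hb', Units.val_mul]

theorem inv_mem_Hgrp {a : (M2 E n)ˣ} (ha : a ∈ Hgrp E n P d) : a⁻¹ ∈ Hgrp E n P d := by
  obtain ⟨ha, ha'⟩ := (mem_Hgrp_iff_blockDiagPart hd hr).1 ha
  refine (mem_Hgrp_iff_blockDiagPart hd hr).2 ⟨inv_mem_Ugrp hd ha, ?_⟩
  calc blockDiagPart (↑a⁻¹ : M2 E n) = blockDiagPart ↑a⁻¹ * blockDiagPart ↑a * ↑a⁻¹ := by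
        rw [mul_assoc, ha', Units.mul_inv, mul_one]
    _ = ↑a⁻¹ := by rw [blockDiagPart_coe_inv_mul hd ha, one_mul]

theorem exists_mul_of_mem_Ugrp {u : (M2 E n)ˣ} (hu : u ∈ Ugrp E n P d) :
    ∃ x ∈ Ngrp E n P d, ∃ h ∈ Hgrp E n P d, u = x * h := by
  let w : (M2 E n)ˣ := ⟨blockDiagPart ↑u, blockDiagPart ↑u⁻¹, blockDiagPart_coe_mul_inv hd hu,
    blockDiagPart_coe_inv_mul hd hu⟩
  have hw : w ∈ Hgrp E n P d := blockDiagPart_mem_Hgrp hd hr hu rfl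
  have hw' : w⁻¹ ∈ Ugrp E n P d := inv_mem_Ugrp hd (Hgrp_subset_Ugrp hd hr hw)
  refine ⟨u * w⁻¹, mem_Ngrp_iff.2 ⟨mul_mem_Ugrp hd hu hw', ?_⟩, w, hw, by group⟩
  rw [blockDiagPart_coe_mul hu.1 hw'.1]
  exact (congrArg _ (blockDiagPart_blockDiagPart _)).trans (blockDiagPart_coe_mul_inv hd hu)

end SemidirectProduct

theorem unipotent_antiinvolution_semidirect_general
    (E : Type) [Field E] (n : ℕ)
    (P : Fin n ⊕ Fin n → Fin n ⊕ Fin n → Prop)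
    (hPtrans : ∀ i j l, P i j → P j l → P i l)
    (d : M2 E n → M2 E n)
    (hdmem : ∀ x ∈ patAlg E n P, d x ∈ patAlg E n P)
    (hdadd : ∀ x ∈ patAlg E n P, ∀ y ∈ patAlg E n P, d (x + y) = d x + d y)
    (hdmul : ∀ x ∈ patAlg E n P, ∀ y ∈ patAlg E n P, d (x * y) = d y * d x)
    (hdinvol : ∀ x ∈ patAlg E n P, d (d x) = x)
    (hdentry : ∀ i j, P i j → idx2 i < idx2 j → ∀ α : E, α ≠ 0 →
      ∃ β : E, β ≠ 0 ∧ d (Matrix.single i j α) =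
        Matrix.single (bar2 j) (bar2 i) β) :
    -- `N` is an abelian subgroup of `U`, normal in `U`
    ((1 : (M2 E n)ˣ) ∈ Ngrp E n P d) ∧
    (∀ a ∈ Ngrp E n P d, ∀ b ∈ Ngrp E n P d, a * b ∈ Ngrp E n P d ∧ a * b = b * a) ∧
    (∀ a ∈ Ngrp E n P d, a⁻¹ ∈ Ngrp E n P d) ∧
    (∀ u ∈ Ugrp E n P d, ∀ a ∈ Ngrp E n P d, u * a * u⁻¹ ∈ Ngrp E n P d) ∧
    -- `H` is a subgroup of `U`
    (Hgrp E n P d ⊆ Ugrp E n P d) ∧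
    ((1 : (M2 E n)ˣ) ∈ Hgrp E n P d) ∧
    (∀ a ∈ Hgrp E n P d, ∀ b ∈ Hgrp E n P d, a * b ∈ Hgrp E n P d) ∧
    (∀ a ∈ Hgrp E n P d, a⁻¹ ∈ Hgrp E n P d) ∧
    -- `U = N ⋊ H` internally
    (∀ u, u ∈ Ngrp E n P d → u ∈ Hgrp E n P d → u = 1) ∧
    (∀ u ∈ Ugrp E n P d, ∃ x ∈ Ngrp E n P d, ∃ h ∈ Hgrp E n P d, u = x * h) ∧
    -- `H` is isomorphic to a pattern subgroup of `UT_n(E)` via `diag(h, h̃⁻¹) ↦ h`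
    (∀ u ∈ Hgrp E n P d, ∀ v ∈ Hgrp E n P d,
      Matrix.toBlocks₁₁ ((↑(u * v) : M2 E n)) =
        Matrix.toBlocks₁₁ (u : M2 E n) * Matrix.toBlocks₁₁ (v : M2 E n)) ∧
    (∀ u ∈ Hgrp E n P d, ∀ v ∈ Hgrp E n P d,
      Matrix.toBlocks₁₁ (u : M2 E n) = Matrix.toBlocks₁₁ (v : M2 E n) → u = v) ∧
    (∀ h : Matrix (Fin n) (Fin n) E,
      (∃ u ∈ Hgrp E n P d, Matrix.toBlocks₁₁ (u : M2 E n) = h) ↔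
        ((∀ i, h i i = 1) ∧
          ∀ a b : Fin n, a ≠ b → h a b ≠ 0 → (P (Sum.inl a) (Sum.inl b) ∧ a < b))) := by
  have hd : IsAntiInvolutionOn (patAlgSubring hPtrans) d := ⟨hdmem, hdadd, hdmul, hdinvol⟩
  have hr := reflectsSupport_patAlg hPtrans hd hdentry
  exact ⟨one_mem_Ngrp hd, fun a ha b hb => ⟨mul_mem_Ngrp hd ha hb, mul_comm_of_mem_Ngrp ha hb⟩,
    fun a ha => inv_mem_Ngrp hd ha, fun u hu a ha => conj_mem_Ngrp hd hu ha,
    Hgrp_subset_Ugrp hd hr, one_mem_Hgrp hd hr, fun a ha b hb => mul_mem_Hgrp hd hr ha hb,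
    fun a ha => inv_mem_Hgrp hd hr ha, fun u hN hH => eq_one_of_mem_Ngrp_of_mem_Hgrp hN hH,
    fun u hu => exists_mul_of_mem_Ugrp hd hr hu,
    fun u _ v hv => toBlocks₁₁_coe_mul_of_mem_Hgrp u hv,
    fun u hu v hv => eq_of_mem_Hgrp_of_toBlocks₁₁_eq hu hv,
    fun h => (exists_mem_Hgrp_toBlocks₁₁_eq_iff hd hr h).trans (fromBlocks_mem_patGrpM_iff h)⟩

/-- For a pattern group `G ⊆ UT_{2n}(F_{q^k})` (`q` odd) and an algebra anti-involution `†`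
of its pattern algebra with `(α e_{ij})† ∈ E^× e_{\bar j \bar i}`, the group
`U = {u ∈ G : u† = u⁻¹}` decomposes as `U = N ⋊ H` with `N` abelian and normal and `H`
isomorphic to a pattern subgroup of `UT_n` via the upper-left block. -/
theorem unipotent_antiinvolution_semidirect
    (E : Type) [Field E] [Fintype E] (hE : ringChar E ≠ 2) (n : ℕ)
    (P : Fin n ⊕ Fin n → Fin n ⊕ Fin n → Prop)
    (hPrefl : ∀ i, P i i) (hPtrans : ∀ i j l, P i j → P j l → P i l)
    (hPle : ∀ i j, P i j → idx2 i ≤ idx2 j)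
    (d : M2 E n → M2 E n)
    (hdmem : ∀ x ∈ patAlg E n P, d x ∈ patAlg E n P)
    (hdadd : ∀ x ∈ patAlg E n P, ∀ y ∈ patAlg E n P, d (x + y) = d x + d y)
    (hdmul : ∀ x ∈ patAlg E n P, ∀ y ∈ patAlg E n P, d (x * y) = d y * d x)
    (hdinvol : ∀ x ∈ patAlg E n P, d (d x) = x)
    (hdentry : ∀ i j, P i j → idx2 i < idx2 j → ∀ α : E, α ≠ 0 →
      ∃ β : E, β ≠ 0 ∧ d (Matrix.single i j α) =
        Matrix.single (bar2 j) (bar2 i) β) :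
    -- `N` is an abelian subgroup of `U`, normal in `U`
    ((1 : (M2 E n)ˣ) ∈ Ngrp E n P d) ∧
    (∀ a ∈ Ngrp E n P d, ∀ b ∈ Ngrp E n P d, a * b ∈ Ngrp E n P d ∧ a * b = b * a) ∧
    (∀ a ∈ Ngrp E n P d, a⁻¹ ∈ Ngrp E n P d) ∧
    (∀ u ∈ Ugrp E n P d, ∀ a ∈ Ngrp E n P d, u * a * u⁻¹ ∈ Ngrp E n P d) ∧
    -- `H` is a subgroup of `U`
    (Hgrp E n P d ⊆ Ugrp E n P d) ∧
    ((1 : (M2 E n)ˣ) ∈ Hgrp E n P d) ∧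
    (∀ a ∈ Hgrp E n P d, ∀ b ∈ Hgrp E n P d, a * b ∈ Hgrp E n P d) ∧
    (∀ a ∈ Hgrp E n P d, a⁻¹ ∈ Hgrp E n P d) ∧
    -- `U = N ⋊ H` internally
    (∀ u, u ∈ Ngrp E n P d → u ∈ Hgrp E n P d → u = 1) ∧
    (∀ u ∈ Ugrp E n P d, ∃ x ∈ Ngrp E n P d, ∃ h ∈ Hgrp E n P d, u = x * h) ∧
    -- `H` is isomorphic to a pattern subgroup of `UT_n(E)` via `diag(h, h̃⁻¹) ↦ h`
    (∀ u ∈ Hgrp E n P d, ∀ v ∈ Hgrp E n P d,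
      Matrix.toBlocks₁₁ ((↑(u * v) : M2 E n)) =
        Matrix.toBlocks₁₁ (u : M2 E n) * Matrix.toBlocks₁₁ (v : M2 E n)) ∧
    (∀ u ∈ Hgrp E n P d, ∀ v ∈ Hgrp E n P d,
      Matrix.toBlocks₁₁ (u : M2 E n) = Matrix.toBlocks₁₁ (v : M2 E n) → u = v) ∧
    (∀ h : Matrix (Fin n) (Fin n) E,
      (∃ u ∈ Hgrp E n P d, Matrix.toBlocks₁₁ (u : M2 E n) = h) ↔
        ((∀ i, h i i = 1) ∧
          ∀ a b : Fin n, a ≠ b → h a b ≠ 0 → (P (Sum.inl a) (Sum.inl b) ∧ a < b))) :=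
  unipotent_antiinvolution_semidirect_general E n P hPtrans d hdmem hdadd hdmul hdinvol hdentry
end
end

section
/- Let G = N ⋊ H be a finite group with N abelian, and let L be any lattice of subgroups of H satisfying (L1)–(L4). For each ψ ∈ Irr(N), define I_L(ψ) to be the maximal element of L contained in the inertial subgroup I_H(ψ). Then the assignment H_ψ = I_L(ψ) satisfies: (H1) H_ψ is normal in I_H(ψ); (H2) H_{ψ^h} = (H_ψ)^h for all h ∈ H; (H3) H_{1_N} = H; and (H4) H_ψ ∩ H_φ ⊆ H_{ψφ} for all ψ, φ ∈ Irr(N). The same four conditions also hold for the minimal choice H_{1_N} = H and H_ψ = {1} for all nontrivial ψ. -/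
open scoped Classical

noncomputable section

/-- The conjugate subgroup `x K x⁻¹`. -/
def Kconj {G : Type} [Group G] (x : G) (K : Subgroup G) : Subgroup G :=
  K.map (MulAut.conj x).toMonoidHom

/-- The conjugate function `f^x = (y ↦ f (x y x⁻¹))`. -/
def conjFun {G : Type} [Group G] (x : G) (f : G → ℂ) : G → ℂ :=
  fun y => f (x * y * x⁻¹)

/-- Restriction of a function to a subgroup (extended by zero). -/
def resOn {G : Type} [Group G] (A : Subgroup G) (f : G → ℂ) : G → ℂ :=
  fun g => if g ∈ A then f g else 0

/-- A supercharacter theory of the subgroup `K` of `G`: a partition `P` of `K` into unions of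
`K`-conjugacy classes and a set `X` of characters of `K` (recorded as functions on `G`
vanishing off `K`), of equal cardinality, constant on blocks, with every irreducible
character of `K` a constituent of exactly one member of `X`. -/
def IsSCTOn {G : Type} [Group G] [Fintype G] (K : Subgroup G)
    (P : Set (Set G)) (X : Set (G → ℂ)) : Prop :=
  (∀ B ∈ P, B ⊆ (K : Set G)) ∧ (∅ ∉ P) ∧
  (∀ g ∈ K, ∃! B, B ∈ P ∧ g ∈ B) ∧
  (∀ B ∈ P, ∀ g ∈ B, ∀ k ∈ K, k * g * k⁻¹ ∈ B) ∧
  (∀ χ ∈ X, (∀ g, g ∉ K → χ g = 0) ∧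
    ∃ V : FDRep ℂ ↥K, ∀ x : ↥K, χ ↑x = V.character x) ∧
  P.ncard = X.ncard ∧
  (∀ χ ∈ X, ∀ B ∈ P, ∀ g ∈ B, ∀ g' ∈ B, χ g = χ g') ∧
  (∀ φ : ↥K → ℂ, IsIrrChar ↥K φ →
    ∃! χ, χ ∈ X ∧ charInner ↥K φ (fun x => χ ↑x) ≠ 0)

/-- A superclass function for the partition `P`: a function constant on each block. -/
def IsSclassFn {G : Type} [Group G] (P : Set (Set G)) (f : G → ℂ) : Prop :=
  ∀ B ∈ P, ∀ g ∈ B, ∀ g' ∈ B, f g = f g'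

/-- A linear character of the subgroup `N`, recorded as a function on `G` vanishing off `N`. -/
def LinCharOn {G : Type} [Group G] (N : Subgroup G) (ψ : G → ℂ) : Prop :=
  ψ 1 = 1 ∧ (∀ a ∈ N, ∀ b ∈ N, ψ (a * b) = ψ a * ψ b) ∧ ∀ g, g ∉ N → ψ g = 0

/-- The trivial character of `N` (extended by zero). -/
def oneN {G : Type} [Group G] (N : Subgroup G) : G → ℂ :=
  fun g => if g ∈ N then 1 else 0

/-- The set `SCh(𝓛)` of supercharacters produced by the method of little groups: the
characters `ψ ⋊ χ` where `ψ` runs over the orbit representatives `S` of `Irr N` and `χ`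
over the supercharacters of `H_ψ` (inducing a supercharacter of `H_ψ` to `I_H(ψ)` does not
change `ψ ⋊ χ`). -/
def SCh {G : Type} [Group G] [Fintype G] (N : Subgroup G)
    (𝒳 : Subgroup G → Set (G → ℂ)) (Hc : (G → ℂ) → Subgroup G)
    (S : Set (G → ℂ)) : Set (G → ℂ) :=
  {f | ∃ ψ ∈ S, ∃ χ ∈ 𝒳 (Hc ψ), f = scr N (Hc ψ) ψ χ}

/-! Conjugation by `h ∈ H` is an automorphism of the subgroup lattice that preserves `𝓛` and
sends the inertia group of `ψ` to that of `ψ^h`; hence it sends the greatest member of `𝓛`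
below `I(ψ)` to the greatest member below `I(ψ^h)`. This is (H2), and (H1) is the special case
`h ∈ I(ψ)`. For (H4), `I_𝓛(ψ) ⊓ I_𝓛(φ)` lies in `𝓛` and fixes both `ψ` and `φ`, hence `ψφ`.
For the minimal choice it suffices that `ψ^h = 1_N` exactly when `ψ = 1_N`. -/

section Conjugation

open scoped Pointwise

variable {G : Type} [Group G]

lemma Kconj_eq_smul (x : G) (K : Subgroup G) : Kconj x K = MulAut.conj x • K := rfl

lemma mem_Kconj {x g : G} {K : Subgroup G} : g ∈ Kconj x K ↔ x⁻¹ * g * x ∈ K := by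
  simp [Kconj_eq_smul, Subgroup.mem_pointwise_smul_iff_inv_smul_mem, MulAut.smul_def]

lemma Kconj_inv_le_iff {x : G} {K M : Subgroup G} : Kconj x⁻¹ K ≤ M ↔ K ≤ Kconj x M := by
  rw [Kconj_eq_smul, Kconj_eq_smul, map_inv, Subgroup.subset_pointwise_smul_iff]

lemma Kconj_eq_self_of_mem {x : G} {K : Subgroup G} (hx : x ∈ K) : Kconj x K = K :=
  Subgroup.conj_smul_eq_self_of_mem hx

lemma Kconj_ite_of_mem {x : G} {H : Subgroup G} (hx : x ∈ H) (p : Prop) [Decidable p] :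
    Kconj x (if p then H else ⊥) = if p then H else ⊥ := by
  split_ifs
  · exact Kconj_eq_self_of_mem hx
  · exact Subgroup.map_bot _

lemma isGreatest_Kconj {L : Set (Subgroup G)} {H : Subgroup G}
    (hL : ∀ K ∈ L, ∀ h ∈ H, Kconj h K ∈ L) {h : G} (hh : h ∈ H) {I M : Subgroup G}
    (hM : IsGreatest {K | K ∈ L ∧ K ≤ I} M) :
    IsGreatest {K | K ∈ L ∧ K ≤ Kconj h I} (Kconj h M) :=
  ⟨⟨hL M hM.1.1 h hh, Subgroup.map_mono hM.1.2⟩, fun K ⟨hK, hKI⟩ =>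
    Kconj_inv_le_iff.1 (hM.2 ⟨hL K hK h⁻¹ (H.inv_mem hh), Kconj_inv_le_iff.2 hKI⟩)⟩

end Conjugation

section Inertia

variable {G : Type} [Group G] (N : Subgroup G) [hN : N.Normal]

/-- The inertia group of `ψ` in all of `G`; the paper's `I_H(ψ)` is `inertia N ψ ⊓ H`. -/
def inertia {β : Type*} (ψ : G → β) : Subgroup G where
  carrier := {g | ∀ n ∈ N, ψ (g * n * g⁻¹) = ψ n}
  one_mem' n _ := by simp
  mul_mem' {a b} ha hb n hn := by
    rw [← hb n hn, ← ha _ (hN.conj_mem n hn b)]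
    group
  inv_mem' {a} ha n hn := by
    rw [inv_inv, ← ha _ (hN.conj_mem' n hn a)]
    congr 1
    group

variable {N}

lemma mem_inertia {β : Type*} {ψ : G → β} {g : G} :
    g ∈ inertia N ψ ↔ ∀ n ∈ N, ψ (g * n * g⁻¹) = ψ n := Iff.rfl

lemma inertia_inf_le_inertia_mul {β : Type*} [Mul β] (ψ φ : G → β) :
    inertia N ψ ⊓ inertia N φ ≤ inertia N (ψ * φ) :=
  fun _ ⟨hψ, hφ⟩ n hn => by simp only [Pi.mul_apply, hψ n hn, hφ n hn]

lemma inertia_oneN : inertia N (oneN N) = ⊤ :=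
  eq_top_iff.2 fun g _ n hn => by simp [oneN, hn, hN.conj_mem n hn g]

lemma inertia_conjFun (x : G) (ψ : G → ℂ) :
    inertia N (conjFun x ψ) = Kconj x⁻¹ (inertia N ψ) := by
  ext g
  simp only [mem_Kconj, inv_inv, mem_inertia, conjFun]
  constructor
  · intro hg m hm
    have := hg (x⁻¹ * m * x) (by simpa using hN.conj_mem m hm x⁻¹)
    rwa [show x * (g * (x⁻¹ * m * x) * g⁻¹) * x⁻¹ = x * g * x⁻¹ * m * (x * g * x⁻¹)⁻¹ by group,
      show x * (x⁻¹ * m * x) * x⁻¹ = m by group] at this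
  · intro hg n hn
    have := hg (x * n * x⁻¹) (hN.conj_mem n hn x)
    rwa [show x * g * x⁻¹ * (x * n * x⁻¹) * (x * g * x⁻¹)⁻¹ = x * (g * n * g⁻¹) * x⁻¹ by group]
      at this

end Inertia

section LinearCharacters

variable {G : Type} [Group G] {N : Subgroup G}

lemma linCharOn_oneN : LinCharOn N (oneN N) :=
  ⟨by simp [oneN], fun a ha b hb => by simp [oneN, ha, hb, N.mul_mem ha hb],
    fun g hg => by simp [oneN, hg]⟩

lemma LinCharOn.mul {ψ φ : G → ℂ} (hψ : LinCharOn N ψ) (hφ : LinCharOn N φ) :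
    LinCharOn N (ψ * φ) :=
  ⟨by simp [hψ.1, hφ.1], fun a ha b hb => by simp [hψ.2.1 a ha b hb, hφ.2.1 a ha b hb]; ring,
    fun g hg => by simp [hψ.2.2 g hg]⟩

lemma oneN_mul_oneN : oneN N * oneN N = oneN N :=
  funext fun g => by by_cases hg : g ∈ N <;> simp [oneN, hg]

lemma conjFun_inv_conjFun (x : G) (ψ : G → ℂ) : conjFun x⁻¹ (conjFun x ψ) = ψ := by
  funext g
  simp [conjFun, mul_assoc]

variable [hN : N.Normal]

lemma LinCharOn.conjFun {ψ : G → ℂ} (hψ : LinCharOn N ψ) (x : G) :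
    LinCharOn N (conjFun x ψ) := by
  refine ⟨by simpa [_root_.conjFun] using hψ.1, fun a ha b hb => ?_, fun g hg => hψ.2.2 _ ?_⟩
  · simpa [_root_.conjFun, mul_assoc] using
      hψ.2.1 _ (hN.conj_mem a ha x) _ (hN.conj_mem b hb x)
  · exact fun hg' => hg (by simpa [mul_assoc] using hN.conj_mem' _ hg' x)

lemma conjFun_oneN (x : G) : conjFun x (oneN N) = oneN N := by
  funext g
  simp only [conjFun, oneN]
  rw [hN.mem_comm_iff, inv_mul_cancel_left]

lemma conjFun_eq_oneN_iff {x : G} {ψ : G → ℂ} : conjFun x ψ = oneN N ↔ ψ = oneN N :=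
  ⟨fun h => by rw [← conjFun_inv_conjFun x ψ, h, conjFun_oneN], fun h => h ▸ conjFun_oneN x⟩

end LinearCharacters

lemma ite_inf_ite_le_ite {α : Type*} [Lattice α] [OrderBot α] (a : α) {p q r : Prop}
    [Decidable p] [Decidable q] [Decidable r] (h : p → q → r) :
    (if p then a else ⊥) ⊓ (if q then a else ⊥) ≤ if r then a else ⊥ := by
  split_ifs <;> simp_all

theorem minimal_and_maximal_choices_general (G : Type) [Group G] [Fintype G]
    (N H : Subgroup G) [hN : N.Normal]
    (L : Set (Subgroup G))
    (hL1H : H ∈ L)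
    (hLmeet : ∀ K₁ ∈ L, ∀ K₂ ∈ L, K₁ ⊓ K₂ ∈ L)
    (hL2 : ∀ K ∈ L, ∀ h ∈ H, Kconj h K ∈ L)
    -- `IL ψ` is the maximal member of `𝓛` contained in `I_H(ψ)`
    (IL : (G → ℂ) → Subgroup G)
    (hILmem : ∀ ψ, LinCharOn N ψ → IL ψ ∈ L)
    (hILle : ∀ ψ, LinCharOn N ψ → IL ψ ≤ H ∧ ∀ k ∈ IL ψ, ∀ n ∈ N, ψ (k * n * k⁻¹) = ψ n)
    (hILmax : ∀ ψ, LinCharOn N ψ → ∀ K ∈ L,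
      (∀ k ∈ K, ∀ n ∈ N, ψ (k * n * k⁻¹) = ψ n) → K ≤ IL ψ) :
    -- the maximal choice satisfies (H1)–(H4)
    ((∀ ψ, LinCharOn N ψ → ∀ h ∈ H,
        (∀ n ∈ N, ψ (h * n * h⁻¹) = ψ n) → Kconj h (IL ψ) = IL ψ) ∧
      (∀ ψ, LinCharOn N ψ → ∀ h ∈ H, IL (conjFun h ψ) = Kconj h⁻¹ (IL ψ)) ∧
      (IL (oneN N) = H) ∧
      (∀ ψ φ, LinCharOn N ψ → LinCharOn N φ → IL ψ ⊓ IL φ ≤ IL (ψ * φ))) ∧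
    -- the minimal choice `H_{1_N} = H`, `H_ψ = ⊥` otherwise, satisfies (H1)–(H4)
    (((∀ ψ, LinCharOn N ψ →
        (∀ k ∈ (if ψ = oneN N then H else ⊥ : Subgroup G), ∀ n ∈ N,
          ψ (k * n * k⁻¹) = ψ n) ∧
        ∀ h ∈ H, (∀ n ∈ N, ψ (h * n * h⁻¹) = ψ n) →
          Kconj h (if ψ = oneN N then H else ⊥ : Subgroup G) =
            (if ψ = oneN N then H else ⊥ : Subgroup G)) ∧
      (∀ ψ, LinCharOn N ψ → ∀ h ∈ H,
        (if conjFun h ψ = oneN N then H else ⊥ : Subgroup G) =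
          Kconj h⁻¹ (if ψ = oneN N then H else ⊥ : Subgroup G)) ∧
      ((if oneN N = oneN N then H else ⊥ : Subgroup G) = H) ∧
      (∀ ψ φ, LinCharOn N ψ → LinCharOn N φ →
        (if ψ = oneN N then H else ⊥ : Subgroup G) ⊓
            (if φ = oneN N then H else ⊥ : Subgroup G) ≤
          (if ψ * φ = oneN N then H else ⊥ : Subgroup G)))) := by
  have hmax : ∀ ψ, LinCharOn N ψ → IsGreatest {K | K ∈ L ∧ K ≤ inertia N ψ} (IL ψ) :=
    fun ψ hψ => ⟨⟨hILmem ψ hψ, (hILle ψ hψ).2⟩, fun K hK => hILmax ψ hψ K hK.1 hK.2⟩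
  have hH : H ≤ inertia N (oneN N) := inertia_oneN (N := N) ▸ le_top
  refine ⟨⟨fun ψ hψ h hh hstab => ?_, fun ψ hψ h hh => ?_, ?_, fun ψ φ hψ hφ => ?_⟩,
    ⟨fun ψ _ => ⟨?_, fun h hh _ => Kconj_ite_of_mem hh _⟩, fun ψ _ h hh => ?_, if_pos rfl,
      fun ψ φ _ _ => ite_inf_ite_le_ite H ?_⟩⟩
  · have := isGreatest_Kconj hL2 hh (hmax ψ hψ)
    rw [Kconj_eq_self_of_mem (show h ∈ inertia N ψ from hstab)] at this
    exact this.unique (hmax ψ hψ)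
  · have := isGreatest_Kconj hL2 (H.inv_mem hh) (hmax ψ hψ)
    rw [← inertia_conjFun] at this
    exact (hmax _ (hψ.conjFun h)).unique this
  · exact le_antisymm (hILle _ linCharOn_oneN).1 (hILmax _ linCharOn_oneN H hL1H hH)
  · exact hILmax _ (hψ.mul hφ) _ (hLmeet _ (hILmem ψ hψ) _ (hILmem φ hφ))
      ((inf_le_inf (hmax ψ hψ).1.2 (hmax φ hφ).1.2).trans (inertia_inf_le_inertia_mul ψ φ))
  · split_ifs with h1
    · exact h1 ▸ hH
    · exact (bot_le : ⊥ ≤ inertia N ψ)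
  · simp only [conjFun_eq_oneN_iff]
    exact (Kconj_ite_of_mem (H.inv_mem hh) _).symm
  · rintro rfl rfl
    exact oneN_mul_oneN

/-- For any lattice `𝓛` of subgroups of `H` satisfying (L1)–(L4), both the maximal choice
`H_ψ = I_𝓛(ψ)` (the maximal member of `𝓛` contained in the inertial subgroup `I_H(ψ)`) and
the minimal choice (`H_{1_N} = H`, `H_ψ = ⊥` for nontrivial `ψ`) satisfy (H1)–(H4). -/
theorem minimal_and_maximal_choices (G : Type) [Group G] [Fintype G]
    (N H : Subgroup G) [hN : N.Normal]
    (hinf : N ⊓ H = ⊥) (hsup : N ⊔ H = ⊤)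
    (hab : ∀ a ∈ N, ∀ b ∈ N, a * b = b * a)
    (L : Set (Subgroup G)) (𝒦 : Subgroup G → Set (Set G)) (𝒳 : Subgroup G → Set (G → ℂ))
    (hL1H : H ∈ L) (hL1bot : ⊥ ∈ L) (hLH : ∀ K ∈ L, K ≤ H)
    (hLmeet : ∀ K₁ ∈ L, ∀ K₂ ∈ L, K₁ ⊓ K₂ ∈ L)
    (hLjoin : ∀ K₁ ∈ L, ∀ K₂ ∈ L, K₁ ⊔ K₂ ∈ L)
    (hL2 : ∀ K ∈ L, ∀ h ∈ H, Kconj h K ∈ L)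
    (hL3 : ∀ K ∈ L, IsSCTOn K (𝒦 K) (𝒳 K))
    (hL4ind : ∀ K₁ ∈ L, ∀ K₂ ∈ L, K₁ ≤ K₂ → ∀ f : G → ℂ,
      IsSclassFn (𝒦 K₁) f → IsSclassFn (𝒦 K₂) (indOn K₁ K₂ f))
    (hL4res : ∀ K₁ ∈ L, ∀ K₂ ∈ L, K₁ ≤ K₂ → ∀ f : G → ℂ,
      IsSclassFn (𝒦 K₂) f → IsSclassFn (𝒦 K₁) (resOn K₁ f))
    (hL4conj : ∀ K ∈ L, ∀ h ∈ H, ∀ χ ∈ 𝒳 K, conjFun h χ ∈ 𝒳 (Kconj h⁻¹ K))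
    -- `IL ψ` is the maximal member of `𝓛` contained in `I_H(ψ)`
    (IL : (G → ℂ) → Subgroup G)
    (hILmem : ∀ ψ, LinCharOn N ψ → IL ψ ∈ L)
    (hILle : ∀ ψ, LinCharOn N ψ → IL ψ ≤ H ∧ ∀ k ∈ IL ψ, ∀ n ∈ N, ψ (k * n * k⁻¹) = ψ n)
    (hILmax : ∀ ψ, LinCharOn N ψ → ∀ K ∈ L,
      (∀ k ∈ K, ∀ n ∈ N, ψ (k * n * k⁻¹) = ψ n) → K ≤ IL ψ) :
    -- the maximal choice satisfies (H1)–(H4)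
    ((∀ ψ, LinCharOn N ψ → ∀ h ∈ H,
        (∀ n ∈ N, ψ (h * n * h⁻¹) = ψ n) → Kconj h (IL ψ) = IL ψ) ∧
      (∀ ψ, LinCharOn N ψ → ∀ h ∈ H, IL (conjFun h ψ) = Kconj h⁻¹ (IL ψ)) ∧
      (IL (oneN N) = H) ∧
      (∀ ψ φ, LinCharOn N ψ → LinCharOn N φ → IL ψ ⊓ IL φ ≤ IL (ψ * φ))) ∧
    -- the minimal choice `H_{1_N} = H`, `H_ψ = ⊥` otherwise, satisfies (H1)–(H4)
    (((∀ ψ, LinCharOn N ψ →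
        (∀ k ∈ (if ψ = oneN N then H else ⊥ : Subgroup G), ∀ n ∈ N,
          ψ (k * n * k⁻¹) = ψ n) ∧
        ∀ h ∈ H, (∀ n ∈ N, ψ (h * n * h⁻¹) = ψ n) →
          Kconj h (if ψ = oneN N then H else ⊥ : Subgroup G) =
            (if ψ = oneN N then H else ⊥ : Subgroup G)) ∧
      (∀ ψ, LinCharOn N ψ → ∀ h ∈ H,
        (if conjFun h ψ = oneN N then H else ⊥ : Subgroup G) =
          Kconj h⁻¹ (if ψ = oneN N then H else ⊥ : Subgroup G)) ∧
      ((if oneN N = oneN N then H else ⊥ : Subgroup G) = H) ∧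
      (∀ ψ φ, LinCharOn N ψ → LinCharOn N φ →
        (if ψ = oneN N then H else ⊥ : Subgroup G) ⊓
            (if φ = oneN N then H else ⊥ : Subgroup G) ≤
          (if ψ * φ = oneN N then H else ⊥ : Subgroup G)))) :=
  minimal_and_maximal_choices_general G N H (hN := hN) L hL1H hLmeet hL2 IL hILmem hILle hILmax
end
end
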